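/- arXiv:1107.2490 — 6 statements merged into one kernel-verified Lean document; each statement's English description precedes it below -/
import Mathlib

section
/- Let x be a random vector in ℝ^n with ‖x‖² ≤ M almost surely, suppose A = E(x·xᵀ) is positive definite with smallest eigenvalue λ0 > 0. Then for every vector v ∈ ℝ^n: E(‖(x·xᵀ − A)·v‖_{A⁻¹}²) ≤ (M/λ0)·‖v‖_A². -/
/-!
Write `z = (vecMulVec x x - A) v = (x ⬝ v) x - A v`. Since `λ₀ ‖u‖² ≤ uᵀ A u`, putting `u = A⁻¹ z`
gives `zᵀ A⁻¹ z ≤ ‖z‖² / λ₀`. Expanding, `‖z‖² = (x ⬝ v)² ‖x‖² - 2 (x ⬝ v)(x ⬝ A v) + ‖A v‖²`,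
and `‖x‖² ≤ M` bounds this by a quadratic form in `x` whose expectation is
`M vᵀ A v - ‖A v‖² ≤ M vᵀ A v`, because `E[(x ⬝ a)(x ⬝ b)] = aᵀ A b`.
-/

open Matrix MeasureTheory

section LinearAlgebra

variable {ι κ : Type*} [Fintype ι] [Fintype κ]

theorem dotProduct_mulVec_eq_sum_sum (a : ι → ℝ) (B : Matrix ι κ ℝ) (b : κ → ℝ) :
    a ⬝ᵥ B *ᵥ b = ∑ i, ∑ j, a i * B i j * b j := by
  simp only [dotProduct, mulVec, Finset.mul_sum, mul_assoc]

theorem dotProduct_vecMulVec_mulVec (y a b : ι → ℝ) :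
    a ⬝ᵥ vecMulVec y y *ᵥ b = (y ⬝ᵥ a) * (y ⬝ᵥ b) := by
  rw [vecMulVec_mulVec, op_smul_eq_smul, dotProduct_smul, smul_eq_mul, dotProduct_comm a y, mul_comm]

theorem abs_mul_le_dotProduct_self (y : ι → ℝ) (i j : ι) : |y i * y j| ≤ y ⬝ᵥ y := by
  have hle : ∀ k, y k * y k ≤ y ⬝ᵥ y := fun k =>
    Finset.single_le_sum (f := fun k => y k * y k) (fun k _ => mul_self_nonneg _)
      (Finset.mem_univ k)
  rw [abs_mul]
  nlinarith [hle i, hle j, sq_nonneg (|y i| - |y j|), sq_abs (y i), sq_abs (y j)]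

theorem dotProduct_self_vecMulVec_sub_mulVec_le {y : ι → ℝ} {M : ℝ} (hy : y ⬝ᵥ y ≤ M)
    (A : Matrix ι ι ℝ) (v : ι → ℝ) :
    ((vecMulVec y y - A) *ᵥ v) ⬝ᵥ ((vecMulVec y y - A) *ᵥ v)
      ≤ (M • v - (2 : ℝ) • A *ᵥ v) ⬝ᵥ vecMulVec y y *ᵥ v + (A *ᵥ v) ⬝ᵥ (A *ᵥ v) := by
  have hexpand : ((vecMulVec y y - A) *ᵥ v) ⬝ᵥ ((vecMulVec y y - A) *ᵥ v)
      = (y ⬝ᵥ v) * (y ⬝ᵥ v) * (y ⬝ᵥ y) - 2 * ((y ⬝ᵥ A *ᵥ v) * (y ⬝ᵥ v))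
        + (A *ᵥ v) ⬝ᵥ (A *ᵥ v) := by
    rw [sub_mulVec, vecMulVec_mulVec, op_smul_eq_smul]
    simp only [sub_dotProduct, dotProduct_sub, smul_dotProduct, dotProduct_smul, smul_eq_mul,
      dotProduct_comm (A *ᵥ v) y]
    ring
  rw [hexpand, sub_dotProduct, smul_dotProduct, smul_dotProduct, dotProduct_vecMulVec_mulVec,
    dotProduct_vecMulVec_mulVec, smul_eq_mul, smul_eq_mul]
  nlinarith [mul_le_mul_of_nonneg_left hy (mul_self_nonneg (y ⬝ᵥ v))]

variable [DecidableEq ι]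

theorem mul_dotProduct_inv_mulVec_le {A : Matrix ι ι ℝ} (hA : IsUnit A.det) {c : ℝ} (hc : 0 ≤ c)
    (hlo : ∀ v, c * (v ⬝ᵥ v) ≤ v ⬝ᵥ A *ᵥ v) (w : ι → ℝ) :
    c * (w ⬝ᵥ A⁻¹ *ᵥ w) ≤ w ⬝ᵥ w := by
  set u := A⁻¹ *ᵥ w
  have hAu : A *ᵥ u = w := by rw [mulVec_mulVec, mul_nonsing_inv A hA, one_mulVec]
  have hcu : c * (u ⬝ᵥ u) ≤ u ⬝ᵥ w := hAu ▸ hlo u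
  have hsq : 0 ≤ (c • u - w) ⬝ᵥ (c • u - w) := by simpa using dotProduct_self_star_nonneg (c • u - w)
  simp only [sub_dotProduct, dotProduct_sub, smul_dotProduct, dotProduct_smul, smul_eq_mul,
    dotProduct_comm w u] at hsq
  rw [dotProduct_comm]
  -- `c² ‖u‖² ≤ c (u ⬝ w)` together with `0 ≤ ‖c u - w‖²`
  nlinarith [mul_le_mul_of_nonneg_left hcu hc]

end LinearAlgebra

section Moments

variable {ι κ Ω : Type*} [Fintype ι] [Fintype κ] [MeasurableSpace Ω] {μ : Measure Ω}

theorem integrable_dotProduct_mulVec {B : Ω → Matrix ι κ ℝ}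
    (hB : ∀ i j, Integrable (fun ω => B ω i j) μ) (a : ι → ℝ) (b : κ → ℝ) :
    Integrable (fun ω => a ⬝ᵥ B ω *ᵥ b) μ := by
  simp only [dotProduct_mulVec_eq_sum_sum]
  exact integrable_finsetSum _ fun i _ => integrable_finsetSum _ fun j _ =>
    ((hB i j).const_mul _).mul_const _

theorem integral_dotProduct_mulVec {B : Ω → Matrix ι κ ℝ}
    (hB : ∀ i j, Integrable (fun ω => B ω i j) μ) (a : ι → ℝ) (b : κ → ℝ) :
    ∫ ω, a ⬝ᵥ B ω *ᵥ b ∂μ = a ⬝ᵥ (Matrix.of fun i j => ∫ ω, B ω i j ∂μ) *ᵥ b := by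
  simp only [dotProduct_mulVec_eq_sum_sum]
  rw [integral_finsetSum _ fun i _ => integrable_finsetSum _ fun j _ =>
    ((hB i j).const_mul _).mul_const _]
  refine Finset.sum_congr rfl fun i _ => ?_
  rw [integral_finsetSum _ fun j _ => ((hB i j).const_mul _).mul_const _]
  simp only [integral_mul_const, integral_const_mul, of_apply]

theorem integrable_vecMulVec_apply [IsFiniteMeasure μ] {x : Ω → ι → ℝ} (hx : Measurable x)
    {M : ℝ} (hM : ∀ᵐ ω ∂μ, x ω ⬝ᵥ x ω ≤ M) (i j : ι) :
    Integrable (fun ω => vecMulVec (x ω) (x ω) i j) μ := by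
  refine Integrable.mono' (integrable_const M)
    (((measurable_pi_apply i).comp hx).mul ((measurable_pi_apply j).comp hx)).aestronglyMeasurable ?_
  filter_upwards [hM] with ω hω
  exact (abs_mul_le_dotProduct_self (x ω) i j).trans hω

theorem integrable_dotProduct_vecMulVec_mulVec [IsFiniteMeasure μ] {x : Ω → ι → ℝ}
    (hx : Measurable x) {M : ℝ} (hM : ∀ᵐ ω ∂μ, x ω ⬝ᵥ x ω ≤ M) (a b : ι → ℝ) :
    Integrable (fun ω => a ⬝ᵥ vecMulVec (x ω) (x ω) *ᵥ b) μ :=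
  integrable_dotProduct_mulVec (integrable_vecMulVec_apply hx hM) a b

theorem integral_dotProduct_vecMulVec_mulVec [IsFiniteMeasure μ] {x : Ω → ι → ℝ}
    (hx : Measurable x) {M : ℝ} (hM : ∀ᵐ ω ∂μ, x ω ⬝ᵥ x ω ≤ M) {A : Matrix ι ι ℝ}
    (hA : ∀ i j, A i j = ∫ ω, x ω i * x ω j ∂μ) (a b : ι → ℝ) :
    ∫ ω, a ⬝ᵥ vecMulVec (x ω) (x ω) *ᵥ b ∂μ = a ⬝ᵥ A *ᵥ b := by
  rw [integral_dotProduct_mulVec (integrable_vecMulVec_apply hx hM)]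
  congr
  ext i j
  simp [hA, vecMulVec_apply]

end Moments

/-- For a random vector `x` with `‖x‖² ≤ M` a.s. and `A = E(x xᵀ)` positive definite
with smallest eigenvalue `λ0 > 0`, for every `v`:
`E(‖(x xᵀ - A)v‖_{A⁻¹}²) ≤ (M/λ0) ‖v‖_A²`. -/
theorem xi2_second_moment_bound {n : ℕ}
    {Ω : Type*} [MeasurableSpace Ω] (μ : Measure Ω) [IsProbabilityMeasure μ]
    (x : Ω → Fin n → ℝ) (hxm : Measurable x)
    (M : ℝ) (hM : ∀ᵐ ω ∂μ, x ω ⬝ᵥ x ω ≤ M)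
    (A : Matrix (Fin n) (Fin n) ℝ)
    (hA : ∀ i j, A i j = ∫ ω, x ω i * x ω j ∂μ)
    (hApd : A.PosDef)
    (lam0 : ℝ) (hlam0 : 0 < lam0)
    (hlo : ∀ v : Fin n → ℝ, lam0 * (v ⬝ᵥ v) ≤ v ⬝ᵥ A *ᵥ v) :
    ∀ v : Fin n → ℝ,
      ∫ ω, ((vecMulVec (x ω) (x ω) - A) *ᵥ v) ⬝ᵥ
          (A⁻¹ *ᵥ ((vecMulVec (x ω) (x ω) - A) *ᵥ v)) ∂μ
        ≤ (M / lam0) * (v ⬝ᵥ A *ᵥ v) := by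
  intro v
  set h : Ω → ℝ := fun ω =>
    (M • v - (2 : ℝ) • A *ᵥ v) ⬝ᵥ vecMulVec (x ω) (x ω) *ᵥ v + (A *ᵥ v) ⬝ᵥ (A *ᵥ v)
  have hh_int : Integrable h μ :=
    (integrable_dotProduct_vecMulVec_mulVec hxm hM _ v).add (integrable_const _)
  have hh : ∫ ω, h ω ∂μ = M * (v ⬝ᵥ A *ᵥ v) - (A *ᵥ v) ⬝ᵥ (A *ᵥ v) := by
    rw [integral_add (integrable_dotProduct_vecMulVec_mulVec hxm hM _ v) (integrable_const _),
      integral_dotProduct_vecMulVec_mulVec hxm hM hA, integral_const, probReal_univ, one_smul,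
      sub_dotProduct, smul_dotProduct, smul_dotProduct, smul_eq_mul, smul_eq_mul]
    ring
  have hf_le : ∀ᵐ ω ∂μ, ((vecMulVec (x ω) (x ω) - A) *ᵥ v) ⬝ᵥ
      (A⁻¹ *ᵥ ((vecMulVec (x ω) (x ω) - A) *ᵥ v)) ≤ lam0⁻¹ * h ω := by
    filter_upwards [hM] with ω hω
    rw [le_inv_mul_iff₀ hlam0]
    exact (mul_dotProduct_inv_mulVec_le hApd.det_pos.ne'.isUnit hlam0.le hlo _).trans
      (dotProduct_self_vecMulVec_sub_mulVec_le hω A v)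
  have hf_nonneg : ∀ᵐ ω ∂μ, 0 ≤ ((vecMulVec (x ω) (x ω) - A) *ᵥ v) ⬝ᵥ
      (A⁻¹ *ᵥ ((vecMulVec (x ω) (x ω) - A) *ᵥ v)) :=
    .of_forall fun ω => by
      simpa using hApd.inv.posSemidef.dotProduct_mulVec_nonneg ((vecMulVec (x ω) (x ω) - A) *ᵥ v)
  have hAv : 0 ≤ (A *ᵥ v) ⬝ᵥ (A *ᵥ v) := by simpa using dotProduct_self_star_nonneg (A *ᵥ v)
  calc _ ≤ ∫ ω, lam0⁻¹ * h ω ∂μ := integral_mono_of_nonneg hf_nonneg (hh_int.const_mul _) hf_le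
    _ = lam0⁻¹ * (M * (v ⬝ᵥ A *ᵥ v) - (A *ᵥ v) ⬝ᵥ (A *ᵥ v)) := by rw [integral_const_mul, hh]
    _ ≤ lam0⁻¹ * (M * (v ⬝ᵥ A *ᵥ v)) := by gcongr; linarith
    _ = M / lam0 * (v ⬝ᵥ A *ᵥ v) := by ring
end

section
/- Let γ_t = γ0·(1 + a·γ0·t)^{−c} with γ0 > 0, a > 0, 0 ≤ c ≤ 1, let 0 < λ0 ≤ λ1 with γ0·λ1 ≤ 1 and (2c−1)·a < λ0, and set κ = 1 − max(0, 2c−1)·a/λ0. Then for every integer k ≥ 1: (1/γ_{k+1} − 1/γ_k)·(1/γ_{k+1}) ≤ (1/γ_k − 1/γ_{k−1})·(1/γ_k)·(1 − λ0·γ_k)^{κ−1}. -/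
/-!
With `h = aγ0` and `v = 1 + hk`, the numbers `1/γ_{k-1}, 1/γ_k, 1/γ_{k+1}` are `γ0⁻¹` times
`(v - h)^c, v^c, (v + h)^c`. Concavity of `t ↦ t^c`, in the sharp form that
`(t + h)^c - (1 + h/v)^(c-1) t^c` decreases on `[v - h, v]`, bounds the new increment by
`(1 + h/v)^(c-1)` times the old one, which reduces the claim to
`(1 + h/v)^(2c-1) ≤ (1 - λ0 γ_k)^(κ-1)`. With `m = max 0 (2c-1)`, Bernoulli's inequality gives
`(1 + h/v)^(2c-1) ≤ 1 + m h/v ≤ 1 + m h v^(-c) = 1 + (m a/λ0) λ0 γ_k`, and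
`1 + s x ≤ (1 - x)^(-s)` for `x < 1` concludes.
-/

open Real

theorem rpow_add_sub_rpow_add_le {c h u v : ℝ} (hc0 : 0 ≤ c) (hc1 : c ≤ 1) (hh : 0 ≤ h)
    (hu : 0 < u) (huv : u ≤ v) :
    (v + h) ^ c - (u + h) ^ c ≤ (1 + h / v) ^ (c - 1) * (v ^ c - u ^ c) := by
  set K := (1 + h / v) ^ (c - 1)
  have hpos : ∀ t ∈ Set.Icc u v, 0 < t := fun t ht => hu.trans_le ht.1
  have hderiv : ∀ t ∈ Set.Icc u v, HasDerivAt (fun t => (t + h) ^ c - K * t ^ c)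
      (c * (t + h) ^ (c - 1) - K * (c * t ^ (c - 1))) t := fun t ht =>
    (((hasDerivAt_id' t).add_const h).rpow_const (Or.inl (by linarith [hpos t ht]))).sub
      ((hasDerivAt_rpow_const (Or.inl (hpos t ht).ne')).const_mul K) |>.congr_deriv (by simp)
  have hanti : AntitoneOn (fun t => (t + h) ^ c - K * t ^ c) (Set.Icc u v) := by
    refine antitoneOn_of_hasDerivWithinAt_nonpos (convex_Icc u v)
      (fun t ht => (hderiv t ht).continuousAt.continuousWithinAt)
      (fun t ht => (hderiv t (interior_subset ht)).hasDerivWithinAt) fun t ht => ?_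
    have htv : t ≤ v := (interior_subset ht).2
    have ht0 := hpos t (interior_subset ht)
    have hr : 0 < 1 + h / t := by have := div_nonneg hh ht0.le; linarith
    have hratio : (1 + h / t) ^ (c - 1) ≤ K :=
      rpow_le_rpow_of_nonpos (by have := div_nonneg hh (ht0.le.trans htv); linarith)
        (by gcongr) (by linarith)
    have hsplit : (t + h) ^ (c - 1) = t ^ (c - 1) * (1 + h / t) ^ (c - 1) := by
      rw [← mul_rpow ht0.le hr.le, mul_add, mul_div_cancel₀ _ ht0.ne', mul_one]
    rw [hsplit, sub_nonpos]
    calc c * (t ^ (c - 1) * (1 + h / t) ^ (c - 1))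
        = c * t ^ (c - 1) * (1 + h / t) ^ (c - 1) := by ring
      _ ≤ c * t ^ (c - 1) * K := by gcongr
      _ = K * (c * t ^ (c - 1)) := by ring
  have := hanti ⟨le_rfl, huv⟩ ⟨huv, le_rfl⟩ huv
  simp only at this
  linarith

theorem rpow_increment_mul_le {c h v : ℝ} (hc0 : 0 ≤ c) (hc1 : c ≤ 1) (hh : 0 ≤ h)
    (hhv : h < v) :
    ((v + h) ^ c - v ^ c) * (v + h) ^ c ≤
      (v ^ c - (v - h) ^ c) * v ^ c * (1 + h / v) ^ (2 * c - 1) := by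
  have hv : 0 < v := hh.trans_lt hhv
  have hr : 0 < 1 + h / v := by have := div_nonneg hh hv.le; linarith
  have hconc := rpow_add_sub_rpow_add_le hc0 hc1 hh (sub_pos.2 hhv) (sub_le_self v hh)
  rw [sub_add_cancel] at hconc
  have hsplit : (v + h) ^ c = v ^ c * (1 + h / v) ^ c := by
    rw [← mul_rpow hv.le hr.le, mul_add, mul_div_cancel₀ _ hv.ne', mul_one]
  have hexp : (1 + h / v) ^ (c - 1) * (1 + h / v) ^ c = (1 + h / v) ^ (2 * c - 1) := by
    rw [← rpow_add hr]; ring_nf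
  calc ((v + h) ^ c - v ^ c) * (v + h) ^ c
      ≤ (1 + h / v) ^ (c - 1) * (v ^ c - (v - h) ^ c) * (v + h) ^ c := by gcongr
    _ = (v ^ c - (v - h) ^ c) * v ^ c * (1 + h / v) ^ (2 * c - 1) := by
      rw [hsplit, ← hexp]; ring

theorem one_add_rpow_le_one_add_max_mul {p y : ℝ} (hp : p ≤ 1) (hy : 0 ≤ y) :
    (1 + y) ^ p ≤ 1 + max 0 p * y :=
  (rpow_le_rpow_of_exponent_le (by linarith) (le_max_right 0 p)).trans
    (rpow_one_add_le_one_add_mul_self (by linarith) (le_max_left 0 p) (max_le zero_le_one hp))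

theorem one_add_mul_le_one_sub_rpow_neg {s x : ℝ} (hs : 0 ≤ s) (hx : x < 1) :
    1 + s * x ≤ (1 - x) ^ (-s) := by
  have hlog : log (1 - x) ≤ -x := by linarith [log_le_sub_one_of_pos (sub_pos.2 hx)]
  rw [rpow_def_of_pos (sub_pos.2 hx)]
  calc 1 + s * x ≤ log (1 - x) * -s + 1 := by nlinarith
    _ ≤ exp (log (1 - x) * -s) := add_one_le_exp _

theorem one_add_div_rpow_le_one_sub_rpow {a γ0 c lam0 v : ℝ} (hγ0 : 0 ≤ γ0) (ha : 0 ≤ a)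
    (hc1 : c ≤ 1) (hlam0 : 0 < lam0) (hlγ : lam0 * γ0 ≤ 1) (hv : 1 < v) :
    (1 + a * γ0 / v) ^ (2 * c - 1) ≤
      (1 - lam0 * (γ0 * v ^ (-c))) ^ (-(max 0 (2 * c - 1) * a / lam0)) := by
  set m := max 0 (2 * c - 1)
  have hm : 0 ≤ m := le_max_left 0 _
  have hinv : v ^ (-1 : ℝ) ≤ v ^ (-c) := rpow_le_rpow_of_exponent_le hv.le (by linarith)
  have hscale : m * a / lam0 * (lam0 * (γ0 * v ^ (-c))) = m * (a * γ0) * v ^ (-c) := by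
    field_simp
  calc (1 + a * γ0 / v) ^ (2 * c - 1) ≤ 1 + m * (a * γ0 / v) :=
        one_add_rpow_le_one_add_max_mul (by linarith) (by positivity)
    _ ≤ 1 + m * a / lam0 * (lam0 * (γ0 * v ^ (-c))) := by
        rw [hscale, div_eq_mul_inv, ← rpow_neg_one, ← mul_assoc]
        gcongr
    _ ≤ (1 - lam0 * (γ0 * v ^ (-c))) ^ (-(m * a / lam0)) := by
        -- if `m = 0` the exponent vanishes (and the base may be `0`); otherwise `c > 1/2` keeps it positive
        rcases hm.eq_or_lt with hm0 | hm0
        · simp [← hm0]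
        have hc : 0 < 2 * c - 1 := by
          by_contra! hle
          exact hm0.ne' (max_eq_left hle)
        refine one_add_mul_le_one_sub_rpow_neg (by positivity) ?_
        calc lam0 * (γ0 * v ^ (-c)) = lam0 * γ0 * v ^ (-c) := by ring
          _ ≤ 1 * v ^ (-c) := by gcongr
          _ < 1 := by rw [one_mul]; exact rpow_lt_one_of_one_lt_of_neg hv (by linarith)

theorem learning_rate_increment_lemma_general
    (γ0 a c lam0 lam1 : ℝ) (hγ0 : 0 < γ0) (ha : 0 < a)
    (hc0 : 0 ≤ c) (hc1 : c ≤ 1) (hlam0 : 0 < lam0) (hlam : lam0 ≤ lam1)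
    (hgl : γ0 * lam1 ≤ 1)
    (κ : ℝ) (hκ : κ = 1 - max 0 (2 * c - 1) * a / lam0)
    (γ : ℕ → ℝ) (hγ : ∀ t : ℕ, γ t = γ0 * (1 + a * γ0 * t) ^ (-c)) :
    ∀ k : ℕ, 1 ≤ k →
      (1 / γ (k + 1) - 1 / γ k) * (1 / γ (k + 1)) ≤
        (1 / γ k - 1 / γ (k - 1)) * (1 / γ k) * (1 - lam0 * γ k) ^ (κ - 1) := by
  intro k hk
  set h := a * γ0
  set v : ℝ := 1 + h * k
  have hh : 0 < h := mul_pos ha hγ0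
  have hhk : h ≤ h * k := le_mul_of_one_le_right hh.le (by exact_mod_cast hk)
  have hhv : h < v := by linarith
  have hinv : ∀ t : ℕ, 1 / γ t = γ0⁻¹ * (1 + h * t) ^ c := fun t => by
    rw [hγ, rpow_neg (by positivity), one_div, mul_inv, inv_inv]
  have hprev : 1 + h * ((k - 1 : ℕ) : ℝ) = v - h := by rw [Nat.cast_sub hk]; ring
  have hnext : 1 + h * ((k + 1 : ℕ) : ℝ) = v + h := by push_cast; ring
  have hF : (1 + h / v) ^ (2 * c - 1) ≤ (1 - lam0 * γ k) ^ (κ - 1) := by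
    rw [hγ k, hκ, sub_sub_cancel_left]
    exact one_add_div_rpow_le_one_sub_rpow hγ0.le ha.le hc1 hlam0
      (by nlinarith) (by linarith)
  have hmono : 0 ≤ (v ^ c - (v - h) ^ c) * v ^ c :=
    mul_nonneg (sub_nonneg.2 (rpow_le_rpow (by linarith) (by linarith) hc0)) (by positivity)
  rw [hinv, hinv, hinv, hprev, hnext]
  calc (γ0⁻¹ * (v + h) ^ c - γ0⁻¹ * v ^ c) * (γ0⁻¹ * (v + h) ^ c)
      = γ0⁻¹ ^ 2 * (((v + h) ^ c - v ^ c) * (v + h) ^ c) := by ring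
    _ ≤ γ0⁻¹ ^ 2 * ((v ^ c - (v - h) ^ c) * v ^ c * (1 - lam0 * γ k) ^ (κ - 1)) := by
      refine mul_le_mul_of_nonneg_left ?_ (by positivity)
      exact (rpow_increment_mul_le hc0 hc1 hh.le hhv).trans (mul_le_mul_of_nonneg_left hF hmono)
    _ = (γ0⁻¹ * v ^ c - γ0⁻¹ * (v - h) ^ c) * (γ0⁻¹ * v ^ c) * (1 - lam0 * γ k) ^ (κ - 1) := by
      ring

/-- Key learning-rate increment lemma: for `γ_t = γ0 (1 + a γ0 t)^(-c)` and
`κ = 1 - max(0, 2c-1) a / λ0`, consecutive increments of `1/γ` satisfy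
`(1/γ_{k+1} - 1/γ_k)(1/γ_{k+1}) ≤ (1/γ_k - 1/γ_{k-1})(1/γ_k)(1 - λ0 γ_k)^{κ-1}`. -/
theorem learning_rate_increment_lemma
    (γ0 a c lam0 lam1 : ℝ) (hγ0 : 0 < γ0) (ha : 0 < a)
    (hc0 : 0 ≤ c) (hc1 : c ≤ 1) (hlam0 : 0 < lam0) (hlam : lam0 ≤ lam1)
    (hgl : γ0 * lam1 ≤ 1) (hca : (2 * c - 1) * a < lam0)
    (κ : ℝ) (hκ : κ = 1 - max 0 (2 * c - 1) * a / lam0)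
    (γ : ℕ → ℝ) (hγ : ∀ t : ℕ, γ t = γ0 * (1 + a * γ0 * t) ^ (-c)) :
    ∀ k : ℕ, 1 ≤ k →
      (1 / γ (k + 1) - 1 / γ k) * (1 / γ (k + 1)) ≤
        (1 / γ k - 1 / γ (k - 1)) * (1 / γ k) * (1 - lam0 * γ k) ^ (κ - 1) :=
  learning_rate_increment_lemma_general γ0 a c lam0 lam1 hγ0 ha hc0 hc1 hlam0 hlam hgl κ hκ γ hγ
end

section
/- For every constant c with 0 < c ≤ 1/2, the function f(x) = (x^c − (x−1)^c)·x^c is nonincreasing on the interval (1, ∞). -/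
open Real

/-!
The derivative factors as `f'(x) = c x^(c-1) (x-1)^(c-1) (2 x^c (x-1)^(1-c) - (2x-1))`, and by
weighted AM-GM `x^c (x-1)^(1-c) ≤ c x + (1-c)(x-1) = x - 1 + c ≤ x - 1/2`, so the last factor is
nonpositive.
-/

lemma rpow_mul_sub_one_rpow_one_sub_le {c x : ℝ} (hc : 0 ≤ c) (hc2 : c ≤ 1 / 2) (hx : 1 ≤ x) :
    x ^ c * (x - 1) ^ (1 - c) ≤ x - 1 / 2 := by
  have := geom_mean_le_arith_mean2_weighted hc (by linarith) (by linarith) (sub_nonneg.2 hx)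
    (add_sub_cancel c 1)
  linarith

lemma hasDerivAt_rpow_sub_sub_one_rpow_mul_rpow (c : ℝ) {x : ℝ} (hx : 1 < x) :
    HasDerivAt (fun x : ℝ => (x ^ c - (x - 1) ^ c) * x ^ c)
      (c * x ^ (c - 1) * (x - 1) ^ (c - 1) * (2 * (x ^ c * (x - 1) ^ (1 - c)) - (2 * x - 1)))
      x := by
  have hx0 : 0 < x := by linarith
  have hx1 : 0 < x - 1 := by linarith
  have hpow : HasDerivAt (fun x : ℝ => x ^ c) (c * x ^ (c - 1)) x :=
    hasDerivAt_rpow_const (Or.inl hx0.ne')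
  have hpow_sub : HasDerivAt (fun x : ℝ => (x - 1) ^ c) (c * (x - 1) ^ (c - 1)) x := by
    simpa [Function.comp_def] using (hasDerivAt_rpow_const (p := c) (Or.inl hx1.ne')).comp x
      ((hasDerivAt_id x).sub_const 1)
  refine ((hpow.sub hpow_sub).mul hpow).congr_deriv ?_
  have hx_pow : x ^ c = x ^ (c - 1) * x := by
    rw [← rpow_add_one hx0.ne', sub_add_cancel]
  have hx1_pow : (x - 1) ^ c = (x - 1) ^ (c - 1) * (x - 1) := by
    rw [← rpow_add_one hx1.ne', sub_add_cancel]
  have hinv : (x - 1) ^ (c - 1) * (x - 1) ^ (1 - c) = 1 := by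
    rw [← rpow_add hx1, sub_add_sub_cancel', sub_self, rpow_zero]
  rw [Pi.sub_apply, hx_pow, hx1_pow]
  linear_combination (-2 * c * (x ^ (c - 1)) ^ 2 * x) * hinv

/-- For `0 < c ≤ 1/2`, the function `f(x) = (x^c - (x-1)^c) x^c` is
nonincreasing on `(1, ∞)`. -/
theorem f_antitone_on_Ioi_one (c : ℝ) (hc : 0 < c) (hc2 : c ≤ 1 / 2) :
    AntitoneOn (fun x : ℝ => (x ^ c - (x - 1) ^ c) * x ^ c) (Set.Ioi (1 : ℝ)) := by
  have hderiv := fun x (hx : x ∈ Set.Ioi (1 : ℝ)) ↦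
    hasDerivAt_rpow_sub_sub_one_rpow_mul_rpow c hx
  refine antitoneOn_of_deriv_nonpos (convex_Ioi 1)
    (fun x hx ↦ (hderiv x hx).continuousAt.continuousWithinAt) ?_ ?_ <;> rw [interior_Ioi]
  · exact fun x hx ↦ (hderiv x hx).differentiableAt.differentiableWithinAt
  intro x (hx : 1 < x)
  rw [(hderiv x hx).deriv]
  have hfactor : 0 ≤ c * x ^ (c - 1) * (x - 1) ^ (c - 1) :=
    mul_nonneg (mul_nonneg hc.le (rpow_nonneg (by linarith) _)) (rpow_nonneg (by linarith) _)
  have hamgm := rpow_mul_sub_one_rpow_one_sub_le hc.le hc2 hx.le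
  exact mul_nonpos_of_nonneg_of_nonpos hfactor (by linarith)
end

section
/- Let A be an n×n real symmetric positive definite matrix with smallest eigenvalue λ0 > 0 and largest eigenvalue λ1, let γ_t = γ0·(1 + a·γ0·t)^{−c} with γ0 > 0, a > 0, 0 ≤ c ≤ 1, and suppose γ0·λ1 ≤ 1 and (2c−1)·a < λ0. Define X_j^t = ∏_{i=j}^t (I − γ_i·A) (with X_j^t = I for j > t) and X̄_j^t = γ_j·Σ_{i=j}^t X_{j+1}^i. Then with c0 = a·c·(1 + a·c·γ0)/(λ0 − max(0, 2c−1)·a), for all integers 1 ≤ j ≤ t, in the Loewner order: (I − X_j^t)·A⁻¹ ≼ X̄_j^t ≼ (1 + c0·(1 + a·γ0·j)^{c−1})·A⁻¹ ≼ (1 + c0)·A⁻¹. -/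
/-!
All matrices involved are polynomials in `A`, so through the continuous functional calculus the
Loewner inequalities reduce to scalar inequalities at each point `x ∈ [λ0, λ1]` of the spectrum.
For `x_j^t = ∏_{k=j}^t (1 - γ_k x)` and `x̄_j^t = γ_j ∑_{i=j}^t x_{j+1}^i`, the lower bound
`1 - x_j^t ≤ x̄_j^t x` follows by induction on `t` because `γ` is decreasing. For the upper bound,
`x̄_j^t = γ_j + ρ_j (1 - γ_{j+1} x) x̄_{j+1}^t` with `ρ_j = γ_j / γ_{j+1}`, so `x̄_j^t x ≤ 1 + B_j`
propagates from `j + 1` down to `j` as soon as `ρ_j + (ρ_j - γ_j λ0) B_{j+1} ≤ 1 + B_j`. For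
`B_j = c0 w_j^{c-1}`, `w_j = 1 + a γ0 j`, this says, after multiplication by `w_j^c`, that
`w ↦ w^c + c0 w^{2c-1}` increases by at most `c0 λ0 γ0 (w + a γ0)^{c-1}` on `[w, w + a γ0]`.
That is Bernoulli's inequality when `c ≥ 1/2`; when `c ≤ 1/2` the decrease of `w^{2c-1}` has to
compensate the increase of `w^c`, which is seen through `log ((w + a γ0) / w)`.
-/

open Matrix Finset Real

open scoped MatrixOrder

theorem log_div_mul_le {w b : ℝ} (hw : 0 < w) (hb : 0 ≤ b) :
    log ((w + b) / w) * (w + b) ≤ b + b ^ 2 / (2 * w) := by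
  have hx : 0 < (w + b) / w := by positivity
  have h := self_le_sinh_iff.mpr (log_nonneg ((one_le_div hw).mpr (by linarith : w ≤ w + b)))
  rw [sinh_log hx] at h
  calc log ((w + b) / w) * (w + b) ≤ ((w + b) / w - ((w + b) / w)⁻¹) / 2 * (w + b) :=
        mul_le_mul_of_nonneg_right h (by linarith)
    _ = b + b ^ 2 / (2 * w) := by field_simp; ring

theorem div_le_log_div {w b : ℝ} (hw : 0 < w) (hb : 0 ≤ b) :
    b / (w + b) ≤ log ((w + b) / w) := by
  have h := one_sub_inv_le_log_of_pos (show 0 < (w + b) / w by positivity)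
  rw [inv_div] at h
  convert h using 1
  field_simp
  ring

theorem rpow_sub_rpow_le_mul_log {x y : ℝ} (hx : 0 < x) (hy : 0 < y) (s : ℝ) :
    y ^ s - x ^ s ≤ s * log (y / x) * y ^ s := by
  have h : x ^ s = y ^ s * exp (-(s * log (y / x))) := by
    rw [rpow_def_of_pos hx, rpow_def_of_pos hy, ← exp_add, log_div hy.ne' hx.ne']
    ring_nf
  calc y ^ s - x ^ s = y ^ s * (1 - exp (-(s * log (y / x)))) := by rw [h]; ring
    _ ≤ y ^ s * (s * log (y / x)) := by
        gcongr
        linarith [add_one_le_exp (-(s * log (y / x)))]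
    _ = s * log (y / x) * y ^ s := by ring

theorem rpow_add_sub_rpow_le {w b s : ℝ} (hw : 0 < w) (hb : 0 ≤ b) (hs0 : 0 ≤ s) (hs1 : s ≤ 1) :
    (w + b) ^ s - w ^ s ≤ s * b * w ^ (s - 1) := by
  have hB := rpow_one_add_le_one_add_mul_self (by linarith [div_nonneg hb hw.le] : -1 ≤ b / w)
    hs0 hs1
  have e : (w + b) ^ s = w ^ s * (1 + b / w) ^ s := by
    rw [← mul_rpow hw.le (by positivity)]; congr 1; field_simp
  rw [e, rpow_sub_one hw.ne']
  calc w ^ s * (1 + b / w) ^ s - w ^ s ≤ w ^ s * (1 + s * (b / w)) - w ^ s := by gcongr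
    _ = _ := by ring

theorem rpow_increment_le_of_le_half {b θ c w : ℝ} (hb : 0 < b) (hθ0 : 0 < θ) (hθ1 : θ ≤ 1)
    (hc0 : 0 ≤ c) (hc : c ≤ 1 / 2) {K : ℝ} (hK : K = c * b * (1 + c * b) / θ) (hw : 1 + b ≤ w) :
    (w + b) ^ c + K * (w + b) ^ (2 * c - 1) - (w ^ c + K * w ^ (2 * c - 1))
      ≤ K * θ * (w + b) ^ (c - 1) := by
  set y := w + b
  have hw0 : 0 < w := by linarith
  have hy : 0 < y := by linarith
  set t := log (y / w)
  have ht0 : 0 ≤ t := by linarith [div_le_log_div hw0 hb.le, div_nonneg hb.le hy.le]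
  have hK0 : 0 ≤ K := by rw [hK]; positivity
  have hKθ : K * θ = c * b * (1 + c * b) := by rw [hK]; exact div_mul_cancel₀ _ hθ0.ne'
  have hcbK : c * b ≤ K := by
    rw [hK, le_div_iff₀ hθ0]; nlinarith [mul_nonneg hc0 hb.le]
  -- affine in `c`, and true at `c = 0` and at `c = 1 / 2`
  have hinterp : 1 / (2 * w) ≤ c + (1 - 2 * c) / y := by
    have h0 : 1 / (2 * w) ≤ 1 / y := by
      rw [div_le_div_iff₀ (by positivity) hy]; linarith
    have h1 : 1 / (2 * w) ≤ 1 / 2 := by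
      rw [div_le_div_iff₀ (by positivity) two_pos]; linarith
    calc 1 / (2 * w) = (1 - 2 * c) * (1 / (2 * w)) + 2 * c * (1 / (2 * w)) := by ring
      _ ≤ (1 - 2 * c) * (1 / y) + 2 * c * (1 / 2) := by gcongr; linarith
      _ = c + (1 - 2 * c) / y := by ring
  have hcore : c * t * y + K * (2 * c - 1) * t ≤ K * θ := by
    have hup := mul_le_mul_of_nonneg_left (log_div_mul_le hw0 hb.le) hc0
    have hlo := mul_le_mul_of_nonneg_left (div_le_log_div hw0 hb.le)
      (mul_nonneg (mul_nonneg hc0 hb.le) (by linarith : 0 ≤ 1 - 2 * c))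
    have hmid := mul_le_mul_of_nonneg_left hinterp (mul_nonneg (mul_nonneg hc0 hb.le) hb.le)
    have hK' := mul_le_mul_of_nonneg_right hcbK (mul_nonneg (by linarith : 0 ≤ 1 - 2 * c) ht0)
    have e1 : c * b * b * (1 / (2 * w)) = c * (b ^ 2 / (2 * w)) := by ring
    have e2 : c * b * b * (c + (1 - 2 * c) / y)
        = c * b * c * b + c * b * (1 - 2 * c) * (b / y) := by ring
    linarith
  have e1 : y ^ c = y ^ (c - 1) * y := by rw [← rpow_add_one hy.ne']; ring_nf
  have e2 : y ^ (2 * c - 1) = y ^ (c - 1) * y ^ c := by rw [← rpow_add hy]; ring_nf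
  have hneg : K * (2 * c - 1) * t * y ^ c ≤ K * (2 * c - 1) * t := by
    have : K * (2 * c - 1) * t ≤ 0 :=
      mul_nonpos_of_nonpos_of_nonneg (mul_nonpos_of_nonneg_of_nonpos hK0 (by linarith)) ht0
    nlinarith [one_le_rpow (by linarith : (1 : ℝ) ≤ y) hc0]
  calc (y ^ c + K * y ^ (2 * c - 1)) - (w ^ c + K * w ^ (2 * c - 1))
      = (y ^ c - w ^ c) + K * (y ^ (2 * c - 1) - w ^ (2 * c - 1)) := by ring
    _ ≤ c * t * y ^ c + K * ((2 * c - 1) * t * y ^ (2 * c - 1)) :=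
        add_le_add (rpow_sub_rpow_le_mul_log hw0 hy c)
          (mul_le_mul_of_nonneg_left (rpow_sub_rpow_le_mul_log hw0 hy _) hK0)
    _ = y ^ (c - 1) * (c * t * y + K * (2 * c - 1) * t * y ^ c) := by rw [e2, e1]; ring
    _ ≤ y ^ (c - 1) * (K * θ) := by gcongr; linarith
    _ = K * θ * y ^ (c - 1) := by ring

theorem rpow_increment_le_of_half_le {b θ c w : ℝ} (hb : 0 < b) (hc : 1 / 2 ≤ c) (hc1 : c ≤ 1)
    (hθ : (2 * c - 1) * b < θ) {K : ℝ} (hK : K = c * b * (1 + c * b) / (θ - (2 * c - 1) * b))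
    (hw : 1 + b ≤ w) :
    (w + b) ^ c + K * (w + b) ^ (2 * c - 1) - (w ^ c + K * w ^ (2 * c - 1))
      ≤ K * θ * (w + b) ^ (c - 1) := by
  set y := w + b with hy_def
  have hw0 : 0 < w := by linarith
  have hy : 0 < y := by linarith
  have hK0 : 0 ≤ K := by rw [hK]; exact div_nonneg (by positivity) (by linarith)
  have hKθ : c * b * (1 + c * b) + K * ((2 * c - 1) * b) = K * θ := by
    have : K * (θ - (2 * c - 1) * b) = c * b * (1 + c * b) := by
      rw [hK]; exact div_mul_cancel₀ _ (by linarith)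
    linarith
  have hwc : w ^ (c - 1) ≤ (1 + c * b) * y ^ (c - 1) := by
    have hB := rpow_one_add_le_one_add_mul_self
      (by linarith [div_nonneg hb.le hw0.le] : -1 ≤ b / w) (by linarith : 0 ≤ 1 - c) (by linarith)
    have e : w ^ (c - 1) = y ^ (c - 1) * (1 + b / w) ^ (1 - c) := by
      rw [show 1 + b / w = y / w by rw [hy_def]; field_simp, div_rpow hy.le hw0.le,
        ← mul_div_assoc, ← rpow_add hy, show c - 1 + (1 - c) = 0 by ring, rpow_zero, one_div,
        ← rpow_neg hw0.le, neg_sub]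
    have : (1 - c) * (b / w) ≤ c * b := by
      have : 1 - c ≤ c * w := by nlinarith
      rw [mul_div_assoc', div_le_iff₀ hw0]
      nlinarith [mul_le_mul_of_nonneg_right this hb.le]
    rw [e, mul_comm (1 + c * b)]
    gcongr
    linarith
  have hw2 : w ^ (2 * c - 2) ≤ y ^ (c - 1) := by
    have e : w ^ (2 * c - 2) = (w ^ (2 : ℝ)) ^ (c - 1) := by
      rw [← rpow_mul hw0.le]; ring_nf
    rw [e]
    apply rpow_le_rpow_of_nonpos hy _ (by linarith)
    rw [rpow_two]; nlinarith
  have hd : 0 ≤ (2 * c - 1) * b := mul_nonneg (by linarith) hb.le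
  calc (y ^ c + K * y ^ (2 * c - 1)) - (w ^ c + K * w ^ (2 * c - 1))
      = (y ^ c - w ^ c) + K * (y ^ (2 * c - 1) - w ^ (2 * c - 1)) := by ring
    _ ≤ c * b * w ^ (c - 1) + K * ((2 * c - 1) * b * w ^ (2 * c - 1 - 1)) :=
        add_le_add (rpow_add_sub_rpow_le hw0 hb.le (by linarith) hc1)
          (mul_le_mul_of_nonneg_left
            (rpow_add_sub_rpow_le hw0 hb.le (by linarith) (by linarith)) hK0)
    _ ≤ c * b * ((1 + c * b) * y ^ (c - 1)) + K * ((2 * c - 1) * b * y ^ (c - 1)) := by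
        rw [show 2 * c - 1 - 1 = 2 * c - 2 by ring]
        gcongr
    _ = K * θ * y ^ (c - 1) := by rw [← hKθ]; ring

theorem rpow_increment_le {b θ c w : ℝ} (hb : 0 < b) (hθ1 : θ ≤ 1) (hc0 : 0 ≤ c) (hc1 : c ≤ 1)
    (hθ : max 0 (2 * c - 1) * b < θ) {K : ℝ}
    (hK : K = c * b * (1 + c * b) / (θ - max 0 (2 * c - 1) * b)) (hw : 1 + b ≤ w) :
    (w + b) ^ c + K * (w + b) ^ (2 * c - 1) - (w ^ c + K * w ^ (2 * c - 1))
      ≤ K * θ * (w + b) ^ (c - 1) := by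
  rcases le_total c (1 / 2) with hc | hc
  · simp only [max_eq_left (by linarith : 2 * c - 1 ≤ 0), zero_mul, sub_zero] at hθ hK
    exact rpow_increment_le_of_le_half hb hθ hθ1 hc0 hc hK hw
  · rw [max_eq_right (by linarith)] at hθ hK
    exact rpow_increment_le_of_half_le hb hc hc1 hθ hK hw

noncomputable section

def learningRate (γ0 a c : ℝ) (t : ℕ) : ℝ :=
  γ0 * (1 + a * γ0 * t) ^ (-c)

def transitionCoeff (γ : ℕ → ℝ) (j t : ℕ) (x : ℝ) : ℝ :=
  ∏ k ∈ Icc j t, (1 - γ k * x)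

def averagedCoeff (γ : ℕ → ℝ) (j t : ℕ) (x : ℝ) : ℝ :=
  γ j * ∑ i ∈ Icc j t, transitionCoeff γ (j + 1) i x

end

section LearningRate

variable {γ0 a c : ℝ}

theorem one_le_one_add_mul_natCast (hγ0 : 0 < γ0) (ha : 0 < a) (t : ℕ) :
    1 ≤ 1 + a * γ0 * t := by
  have : 0 ≤ a * γ0 * t := by positivity
  linarith

theorem learningRate_pos (hγ0 : 0 < γ0) (ha : 0 < a) (t : ℕ) : 0 < learningRate γ0 a c t :=
  mul_pos hγ0 (rpow_pos_of_pos (by linarith [one_le_one_add_mul_natCast hγ0 ha t]) _)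

theorem learningRate_le (hγ0 : 0 < γ0) (ha : 0 < a) (hc : 0 ≤ c) (t : ℕ) :
    learningRate γ0 a c t ≤ γ0 :=
  mul_le_of_le_one_right hγ0.le
    (rpow_le_one_of_one_le_of_nonpos (one_le_one_add_mul_natCast hγ0 ha t) (by linarith))

theorem antitone_learningRate (hγ0 : 0 < γ0) (ha : 0 < a) (hc : 0 ≤ c) :
    Antitone (learningRate γ0 a c) := fun s t hst =>
  mul_le_mul_of_nonneg_left (rpow_le_rpow_of_nonpos
    (by linarith [one_le_one_add_mul_natCast hγ0 ha s]) (by gcongr) (neg_nonpos.mpr hc)) hγ0.le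

theorem learningRate_ratio_bound {μ c0 : ℝ} (hγ0 : 0 < γ0) (ha : 0 < a) (hc0 : 0 ≤ c)
    (hc1 : c ≤ 1) (hμγ0 : μ * γ0 ≤ 1) (hμ : max 0 (2 * c - 1) * a < μ)
    (hc0def : c0 = a * c * (1 + a * c * γ0) / (μ - max 0 (2 * c - 1) * a)) {j : ℕ} (hj : 1 ≤ j) :
    let γ := learningRate γ0 a c
    γ j / γ (j + 1) + (γ j / γ (j + 1) - γ j * μ) * (c0 * (1 + a * γ0 * ↑(j + 1)) ^ (c - 1))
      ≤ 1 + c0 * (1 + a * γ0 * j) ^ (c - 1) := by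
  simp only [learningRate]
  set b := a * γ0
  set w := 1 + b * j
  have hb : 0 < b := by positivity
  have hw : 1 + b ≤ w := by
    have : (1 : ℝ) ≤ j := by exact_mod_cast hj
    nlinarith
  have hw0 : 0 < w := by linarith
  have hwb : 1 + b * ↑(j + 1) = w + b := by push_cast; ring
  have hK : c0 = c * b * (1 + c * b) / (μ * γ0 - max 0 (2 * c - 1) * b) := by
    have : 0 < μ - max 0 (2 * c - 1) * a := by linarith
    rw [hc0def, show μ * γ0 - max 0 (2 * c - 1) * b = (μ - max 0 (2 * c - 1) * a) * γ0 by ring]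
    field_simp
    ring
  have inc := rpow_increment_le hb hμγ0 hc0 hc1 (by nlinarith) hK hw
  have e1 : (w + b) ^ (2 * c - 1) = (w + b) ^ c * (w + b) ^ (c - 1) := by
    rw [← rpow_add (by linarith)]; ring_nf
  have e2 : w ^ (2 * c - 1) = w ^ c * w ^ (c - 1) := by rw [← rpow_add hw0]; ring_nf
  rw [e1, e2] at inc
  have hρ : γ0 * w ^ (-c) / (γ0 * (w + b) ^ (-c)) = (w + b) ^ c / w ^ c := by
    rw [rpow_neg hw0.le, rpow_neg (by linarith)]
    field_simp
  have hγμ : γ0 * w ^ (-c) * μ = μ * γ0 / w ^ c := by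
    rw [rpow_neg hw0.le]; field_simp
  rw [hwb, hρ, hγμ, ← sub_div, div_mul_eq_mul_div, ← add_div,
    div_le_iff₀ (rpow_pos_of_pos hw0 c)]
  linear_combination inc

end LearningRate

section Coefficients

variable {γ : ℕ → ℝ}

@[fun_prop]
theorem continuous_transitionCoeff (γ : ℕ → ℝ) (j t : ℕ) :
    Continuous (transitionCoeff γ j t) := by
  unfold transitionCoeff; fun_prop

@[fun_prop]
theorem continuous_averagedCoeff (γ : ℕ → ℝ) (j t : ℕ) : Continuous (averagedCoeff γ j t) := by
  unfold averagedCoeff; fun_prop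

theorem transitionCoeff_of_lt (γ : ℕ → ℝ) {j t : ℕ} (h : t < j) (x : ℝ) :
    transitionCoeff γ j t x = 1 := by
  simp [transitionCoeff, Icc_eq_empty_of_lt h]

theorem transitionCoeff_succ (γ : ℕ → ℝ) {j t : ℕ} (h : j ≤ t + 1) (x : ℝ) :
    transitionCoeff γ j (t + 1) x = transitionCoeff γ j t x * (1 - γ (t + 1) * x) :=
  prod_Icc_succ_top h _

theorem transitionCoeff_eq_mul_succ (γ : ℕ → ℝ) {j t : ℕ} (h : j ≤ t) (x : ℝ) :
    transitionCoeff γ j t x = (1 - γ j * x) * transitionCoeff γ (j + 1) t x := by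
  rw [transitionCoeff, ← Ioc_insert_left h, prod_insert left_notMem_Ioc, transitionCoeff,
    Icc_add_one_left_eq_Ioc]

theorem transitionCoeff_nonneg {x : ℝ} (h : ∀ k, γ k * x ≤ 1) (j t : ℕ) :
    0 ≤ transitionCoeff γ j t x :=
  prod_nonneg fun k _ => sub_nonneg.mpr (h k)

theorem averagedCoeff_self (γ : ℕ → ℝ) (j : ℕ) (x : ℝ) : averagedCoeff γ j j x = γ j := by
  simp [averagedCoeff, transitionCoeff_of_lt γ (Nat.lt_succ_self j)]

theorem step_mul_averagedCoeff {j t : ℕ} (h : j < t) (x : ℝ) :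
    γ (j + 1) * averagedCoeff γ j t x =
      γ j * (γ (j + 1) + (1 - γ (j + 1) * x) * averagedCoeff γ (j + 1) t x) := by
  rw [averagedCoeff, averagedCoeff, ← Ioc_insert_left h.le, sum_insert left_notMem_Ioc,
    transitionCoeff_of_lt γ (Nat.lt_succ_self j), ← Icc_add_one_left_eq_Ioc,
    sum_congr rfl fun i hi => transitionCoeff_eq_mul_succ γ (mem_Icc.mp hi).1 x, ← mul_sum]
  ring

theorem one_sub_transitionCoeff_le (hγ : Antitone γ) {x : ℝ} (hx : 0 ≤ x)
    (hγx : ∀ k, γ k * x ≤ 1) {j t : ℕ} (hjt : j ≤ t) :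
    1 - transitionCoeff γ j t x ≤ averagedCoeff γ j t x * x := by
  induction t, hjt using Nat.le_induction with
  | base =>
    rw [averagedCoeff_self, transitionCoeff_eq_mul_succ γ le_rfl,
      transitionCoeff_of_lt γ (Nat.lt_succ_self j)]
    exact le_of_eq (by ring)
  | succ t hjt ih =>
    have key : γ (t + 1) * x * transitionCoeff γ j t x
        ≤ γ j * transitionCoeff γ (j + 1) (t + 1) x * x := by
      rw [transitionCoeff_eq_mul_succ γ hjt, transitionCoeff_succ γ (by omega)]
      linear_combination mul_le_mul_of_nonneg_left (hγ (Nat.le_succ_of_le hjt))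
        (mul_nonneg hx (transitionCoeff_nonneg hγx (j + 1) t))
    rw [transitionCoeff_succ γ (by omega), averagedCoeff, sum_Icc_succ_top (by omega), mul_add,
      add_mul, ← averagedCoeff]
    linear_combination ih + key

theorem averagedCoeff_mul_le (hγ : ∀ k, 0 < γ k) {x μ : ℝ} (hx : μ ≤ x)
    (hγx : ∀ k, γ k * x ≤ 1) {B : ℕ → ℝ} (hB0 : ∀ j, 0 ≤ B j)
    (hB : ∀ j, 1 ≤ j → γ j / γ (j + 1) + (γ j / γ (j + 1) - γ j * μ) * B (j + 1) ≤ 1 + B j)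
    {j t : ℕ} (hj : 1 ≤ j) (hjt : j ≤ t) :
    averagedCoeff γ j t x * x ≤ 1 + B j := by
  induction hjt using Nat.decreasingInduction with
  | self => rw [averagedCoeff_self]; linarith [hγx t, hB0 t]
  | of_succ j hjt ih =>
    have ih := ih (by omega)
    have hρ : γ j / γ (j + 1) * γ (j + 1) = γ j := div_mul_cancel₀ _ (hγ (j + 1)).ne'
    have hrec : averagedCoeff γ j t x = γ j / γ (j + 1) *
        (γ (j + 1) + (1 - γ (j + 1) * x) * averagedCoeff γ (j + 1) t x) := by
      rw [div_mul_eq_mul_div, eq_div_iff (hγ (j + 1)).ne', mul_comm, step_mul_averagedCoeff hjt]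
    have hcoef : 0 ≤ γ j / γ (j + 1) * (1 - γ (j + 1) * x) :=
      mul_nonneg (div_pos (hγ j) (hγ (j + 1))).le (sub_nonneg.mpr (hγx (j + 1)))
    calc averagedCoeff γ j t x * x
        = γ j * x + γ j / γ (j + 1) * (1 - γ (j + 1) * x) * (averagedCoeff γ (j + 1) t x * x) := by
          rw [hrec]; linear_combination x * hρ
      _ ≤ γ j * x + γ j / γ (j + 1) * (1 - γ (j + 1) * x) * (1 + B (j + 1)) := by gcongr
      _ = γ j / γ (j + 1) + (γ j / γ (j + 1) - γ j * x) * B (j + 1) := by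
          linear_combination (-x * (1 + B (j + 1))) * hρ
      _ ≤ γ j / γ (j + 1) + (γ j / γ (j + 1) - γ j * μ) * B (j + 1) := by
          gcongr
          exacts [hB0 _, (hγ j).le]
      _ ≤ 1 + B j := hB j hj

end Coefficients

section FunctionalCalculus

variable {R : Type*} [Ring R] [StarRing R] [TopologicalSpace R] [Algebra ℝ R]
  [ContinuousFunctionalCalculus ℝ R IsSelfAdjoint] {a : R} {γ : ℕ → ℝ} {X : ℕ → ℕ → R}

theorem eq_cfc_transitionCoeff (ha : IsSelfAdjoint a) (hXgt : ∀ j t : ℕ, t < j → X j t = 1)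
    (hXrec : ∀ j t : ℕ, j ≤ t → X j t = X j (t - 1) * (1 - γ t • a)) {j : ℕ} (hj : 1 ≤ j) :
    ∀ t, X j t = cfc (transitionCoeff γ j t) a
  | 0 => by rw [hXgt j 0 hj, funext (transitionCoeff_of_lt γ hj), cfc_const_one ℝ a]
  | t + 1 => by
    rcases lt_or_ge (t + 1) j with h | h
    · rw [hXgt j _ h, funext (transitionCoeff_of_lt γ h), cfc_const_one ℝ a]
    · have hstep : 1 - γ (t + 1) • a = cfc (fun x => 1 - γ (t + 1) * x) a := by
        rw [cfc_sub (fun _ => 1) (fun x => γ (t + 1) * x) a, cfc_const_one ℝ a,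
          cfc_const_mul (γ (t + 1)) (fun x => x) a, cfc_id' ℝ a]
      rw [hXrec j _ h, Nat.add_sub_cancel, eq_cfc_transitionCoeff ha hXgt hXrec hj t, hstep,
        ← cfc_mul (transitionCoeff γ j t) _ a, funext (transitionCoeff_succ γ h)]

theorem eq_cfc_averagedCoeff (ha : IsSelfAdjoint a) (hXgt : ∀ j t : ℕ, t < j → X j t = 1)
    (hXrec : ∀ j t : ℕ, j ≤ t → X j t = X j (t - 1) * (1 - γ t • a)) {Xbar : ℕ → ℕ → R}
    (hXbar : ∀ j t : ℕ, Xbar j t = γ j • ∑ i ∈ Icc j t, X (j + 1) i) (j t : ℕ) :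
    Xbar j t = cfc (averagedCoeff γ j t) a := by
  have hcont : Continuous (∑ i ∈ Icc j t, transitionCoeff γ (j + 1) i) := by
    simpa only [← Finset.sum_fn] using
      continuous_finsetSum _ fun i _ => continuous_transitionCoeff γ (j + 1) i
  rw [hXbar, sum_congr rfl fun i _ => eq_cfc_transitionCoeff ha hXgt hXrec (Nat.le_add_left 1 j) i,
    ← cfc_sum _ a _ fun i _ => (continuous_transitionCoeff γ (j + 1) i).continuousOn,
    ← cfc_const_mul (γ j) _ a hcont.continuousOn]
  congr 1
  ext x
  simp [averagedCoeff]

end FunctionalCalculus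

theorem spectrum_subset_Icc {ι : Type*} [Fintype ι] [DecidableEq ι] {A : Matrix ι ι ℝ}
    {μ L : ℝ} (hlo : ∀ v : ι → ℝ, μ * (v ⬝ᵥ v) ≤ v ⬝ᵥ A *ᵥ v)
    (hhi : ∀ v : ι → ℝ, v ⬝ᵥ A *ᵥ v ≤ L * (v ⬝ᵥ v)) :
    spectrum ℝ A ⊆ Set.Icc μ L := by
  intro x hx
  rw [spectrum.mem_iff, Matrix.isUnit_iff_isUnit_det, isUnit_iff_ne_zero, not_not,
    ← exists_mulVec_eq_zero_iff] at hx
  obtain ⟨v, hv0, hv⟩ := hx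
  have hq : v ⬝ᵥ A *ᵥ v = x * (v ⬝ᵥ v) := by
    rw [Algebra.algebraMap_eq_smul_one, sub_mulVec, smul_mulVec, one_mulVec, sub_eq_zero] at hv
    rw [← hv, dotProduct_smul, smul_eq_mul]
  have hpos : 0 < v ⬝ᵥ v :=
    lt_of_le_of_ne (sum_nonneg fun i _ => mul_self_nonneg (v i))
      (Ne.symm (dotProduct_self_eq_zero.not.mpr hv0))
  exact ⟨le_of_mul_le_mul_right (hq ▸ hlo v) hpos, le_of_mul_le_mul_right (hq ▸ hhi v) hpos⟩

theorem learningRate_coeff_bounds {lam0 lam1 γ0 a c c0 x : ℝ} (hlam0 : 0 < lam0)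
    (hx : x ∈ Set.Icc lam0 lam1) (hγ0 : 0 < γ0) (ha : 0 < a) (hc0 : 0 ≤ c) (hc1 : c ≤ 1)
    (hgl : γ0 * lam1 ≤ 1) (hM : max 0 (2 * c - 1) * a < lam0)
    (hc0def : c0 = a * c * (1 + a * c * γ0) / (lam0 - max 0 (2 * c - 1) * a)) (hc0nn : 0 ≤ c0)
    {j t : ℕ} (hj : 1 ≤ j) (hjt : j ≤ t) :
    (1 - transitionCoeff (learningRate γ0 a c) j t x) * x⁻¹
        ≤ averagedCoeff (learningRate γ0 a c) j t x ∧
      averagedCoeff (learningRate γ0 a c) j t x ≤ (1 + c0 * (1 + a * γ0 * j) ^ (c - 1)) * x⁻¹ := by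
  have hxpos : 0 < x := hlam0.trans_le hx.1
  have hγx : ∀ k, learningRate γ0 a c k * x ≤ 1 := fun k =>
    (mul_le_mul (learningRate_le hγ0 ha hc0 k) hx.2 hxpos.le hγ0.le).trans hgl
  have hθ : lam0 * γ0 ≤ 1 := by nlinarith [hx.1.trans hx.2]
  rw [← div_eq_mul_inv, ← div_eq_mul_inv, div_le_iff₀ hxpos, le_div_iff₀ hxpos]
  exact ⟨one_sub_transitionCoeff_le (antitone_learningRate hγ0 ha hc0) hxpos.le hγx hjt,
    averagedCoeff_mul_le (learningRate_pos hγ0 ha) hx.1 hγx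
      (B := fun k : ℕ => c0 * (1 + a * γ0 * k) ^ (c - 1))
      (fun k => mul_nonneg hc0nn (rpow_nonneg (by linarith [one_le_one_add_mul_natCast hγ0 ha k]) _))
      (fun k hk => learningRate_ratio_bound hγ0 ha hc0 hc1 hθ hM hc0def hk) hj hjt⟩

theorem averaged_transition_matrix_bounds_general {n : ℕ}
    (A : Matrix (Fin n) (Fin n) ℝ) (hApd : A.PosDef)
    (lam0 lam1 : ℝ) (hlam0 : 0 < lam0)
    (hlo : ∀ v : Fin n → ℝ, lam0 * (v ⬝ᵥ v) ≤ v ⬝ᵥ A *ᵥ v)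
    (hhi : ∀ v : Fin n → ℝ, v ⬝ᵥ A *ᵥ v ≤ lam1 * (v ⬝ᵥ v))
    (γ0 a c : ℝ) (hγ0 : 0 < γ0) (ha : 0 < a) (hc0 : 0 ≤ c) (hc1 : c ≤ 1)
    (hgl : γ0 * lam1 ≤ 1) (hca : (2 * c - 1) * a < lam0)
    (γ : ℕ → ℝ) (hγ : ∀ t : ℕ, γ t = γ0 * (1 + a * γ0 * t) ^ (-c))
    (X : ℕ → ℕ → Matrix (Fin n) (Fin n) ℝ)
    (hXgt : ∀ j t : ℕ, t < j → X j t = 1)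
    (hXrec : ∀ j t : ℕ, j ≤ t → X j t = X j (t - 1) * (1 - γ t • A))
    (Xbar : ℕ → ℕ → Matrix (Fin n) (Fin n) ℝ)
    (hXbar : ∀ j t : ℕ, Xbar j t = γ j • ∑ i ∈ Finset.Icc j t, X (j + 1) i)
    (c0 : ℝ) (hc0def : c0 = a * c * (1 + a * c * γ0) / (lam0 - max 0 (2 * c - 1) * a)) :
    ∀ j t : ℕ, 1 ≤ j → j ≤ t →
      (Xbar j t - (1 - X j t) * A⁻¹).PosSemidef ∧
        (((1 + c0 * (1 + a * γ0 * j) ^ (c - 1)) • A⁻¹) - Xbar j t).PosSemidef ∧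
        (((1 + c0) • A⁻¹) - ((1 + c0 * (1 + a * γ0 * j) ^ (c - 1)) • A⁻¹)).PosSemidef := by
  intro j t hj hjt
  obtain rfl : γ = learningRate γ0 a c := funext hγ
  have hA : IsSelfAdjoint A := hApd.isHermitian
  have hspec := spectrum_subset_Icc hlo hhi
  have hM : max 0 (2 * c - 1) * a < lam0 := by
    rw [max_mul_of_nonneg _ _ ha.le, zero_mul]; exact max_lt hlam0 hca
  have hc0nn : 0 ≤ c0 := by rw [hc0def]; exact div_nonneg (by positivity) (by linarith)
  have hbounds := fun x (hx : x ∈ spectrum ℝ A) =>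
    learningRate_coeff_bounds hlam0 (hspec hx) hγ0 ha hc0 hc1 hgl hM hc0def hc0nn hj hjt
  have hinv : A⁻¹ = cfc (·⁻¹ : ℝ → ℝ) A := by
    rw [nonsing_inv_eq_ringInverse, cfc_ringInverse_id A hApd.isUnit]
  have hinv_cont : ContinuousOn (·⁻¹ : ℝ → ℝ) (spectrum ℝ A) :=
    continuousOn_inv₀.mono fun x hx => (hlam0.trans_le (hspec hx).1).ne'
  refine ⟨le_iff.mp ?_, le_iff.mp ?_, ?_⟩
  · rw [eq_cfc_transitionCoeff hA hXgt hXrec hj, eq_cfc_averagedCoeff hA hXgt hXrec hXbar, hinv,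
      ← cfc_const_one ℝ A, ← cfc_sub (fun _ => 1) _ A, ← cfc_mul _ _ A (by fun_prop) hinv_cont]
    exact cfc_mono fun x hx => (hbounds x hx).1
  · rw [eq_cfc_averagedCoeff hA hXgt hXrec hXbar, hinv, ← cfc_const_mul _ _ A hinv_cont]
    exact cfc_mono fun x hx => (hbounds x hx).2
  · rw [← sub_smul]
    refine hApd.inv.posSemidef.smul (sub_nonneg.mpr (add_le_add_right ?_ 1))
    exact mul_le_of_le_one_right hc0nn
      (rpow_le_one_of_one_le_of_nonpos (one_le_one_add_mul_natCast hγ0 ha j) (by linarith))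

/-- Lemma 1 of the paper: bounds on the averaged coefficient matrices
`X̄_j^t = γ_j Σ_{i=j}^t X_{j+1}^i` in the Loewner order, where
`X_j^t = ∏_{i=j}^t (I - γ_i A)`. -/
theorem averaged_transition_matrix_bounds {n : ℕ}
    (A : Matrix (Fin n) (Fin n) ℝ) (hAsymm : A.IsSymm) (hApd : A.PosDef)
    (lam0 lam1 : ℝ) (hlam0 : 0 < lam0)
    (hlo : ∀ v : Fin n → ℝ, lam0 * (v ⬝ᵥ v) ≤ v ⬝ᵥ A *ᵥ v)
    (hhi : ∀ v : Fin n → ℝ, v ⬝ᵥ A *ᵥ v ≤ lam1 * (v ⬝ᵥ v))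
    (γ0 a c : ℝ) (hγ0 : 0 < γ0) (ha : 0 < a) (hc0 : 0 ≤ c) (hc1 : c ≤ 1)
    (hgl : γ0 * lam1 ≤ 1) (hca : (2 * c - 1) * a < lam0)
    (γ : ℕ → ℝ) (hγ : ∀ t : ℕ, γ t = γ0 * (1 + a * γ0 * t) ^ (-c))
    (X : ℕ → ℕ → Matrix (Fin n) (Fin n) ℝ)
    (hXgt : ∀ j t : ℕ, t < j → X j t = 1)
    (hXrec : ∀ j t : ℕ, j ≤ t → X j t = X j (t - 1) * (1 - γ t • A))
    (Xbar : ℕ → ℕ → Matrix (Fin n) (Fin n) ℝ)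
    (hXbar : ∀ j t : ℕ, Xbar j t = γ j • ∑ i ∈ Finset.Icc j t, X (j + 1) i)
    (c0 : ℝ) (hc0def : c0 = a * c * (1 + a * c * γ0) / (lam0 - max 0 (2 * c - 1) * a)) :
    ∀ j t : ℕ, 1 ≤ j → j ≤ t →
      (Xbar j t - (1 - X j t) * A⁻¹).PosSemidef ∧
        (((1 + c0 * (1 + a * γ0 * j) ^ (c - 1)) • A⁻¹) - Xbar j t).PosSemidef ∧
        (((1 + c0) • A⁻¹) - ((1 + c0 * (1 + a * γ0 * j) ^ (c - 1)) • A⁻¹)).PosSemidef :=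
  averaged_transition_matrix_bounds_general A hApd lam0 lam1 hlam0 hlo hhi γ0 a c hγ0 ha hc0 hc1 hgl
    hca γ hγ X hXgt hXrec Xbar hXbar c0 hc0def
end

section
/- Let (x_t, y_t)_{t≥1} be an i.i.d. sequence of random pairs in ℝ^n × ℝ with ‖x_t‖² = M almost surely for a constant M > 0; suppose A = E(x·xᵀ) is positive definite with smallest eigenvalue λ0 > 0, set b = E(x·y), θ* = A⁻¹b, and S = E((x·xᵀ·θ* − x·y)(x·xᵀ·θ* − x·y)ᵀ), and assume tr(S) > 0. Let (γ_t)_{t≥1} be real numbers with γ_t ≥ 2/M + δ for all t, for some δ > 0, and define the SGD iterates θ_t = θ_{t−1} − γ_t·(x_t·x_tᵀ·θ_{t−1} − x_t·y_t) starting from θ_0 = θ*. Then E(‖θ_t − θ*‖²) tends to infinity as t → ∞. -/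
open Matrix MeasureTheory ProbabilityTheory Filter
open scoped ENNReal

/-! With `e = θ - θ*` and the residual `ξ = xᵀθ* - y`, an SGD step reads
`e' = e - γ (xᵀe + ξ) x`, so `‖x‖² = M` gives
`‖e'‖² = ‖e‖² + γ (γM - 2) (xᵀe)² + 2γ (γM - 1) (xᵀe) ξ + γ² M ξ²`.
The second term is nonnegative because `γ ≥ 2/M`. The cross term has mean zero: the current
error depends only on past samples, hence is independent of the fresh one, and
`E[x ξ] = Aθ* - b = 0`. Finally `M E[ξ²] = E[ξ² ‖x‖²] = tr S`, so every step increases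
`E‖θ_t - θ*‖²` by at least `γ_t² tr S ≥ (2/M + δ)² tr S`. -/

section DotProduct

variable {ι : Type*} [Fintype ι]

lemma sq_apply_le_dotProduct_self (v : ι → ℝ) (i : ι) : v i ^ 2 ≤ v ⬝ᵥ v := by
  rw [sq]
  exact Finset.single_le_sum (f := fun j => v j * v j) (fun j _ => mul_self_nonneg _)
    (Finset.mem_univ i)

lemma dotProduct_self_sub_smul (e x : ι → ℝ) (c : ℝ) :
    (e - c • x) ⬝ᵥ (e - c • x) = e ⬝ᵥ e - 2 * c * (x ⬝ᵥ e) + c ^ 2 * (x ⬝ᵥ x) := by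
  simp only [sub_dotProduct, dotProduct_sub, smul_dotProduct, dotProduct_smul, smul_eq_mul,
    dotProduct_comm e x]
  ring

def sgdStep (γ : ℝ) (θ x : ι → ℝ) (y : ℝ) : ι → ℝ := θ - γ • ((x ⬝ᵥ θ) • x - y • x)

lemma sgdStep_sub (γ : ℝ) (θ θ' x : ι → ℝ) (y : ℝ) :
    sgdStep γ θ x y - θ' = (θ - θ') - (γ * (x ⬝ᵥ (θ - θ') + (x ⬝ᵥ θ' - y))) • x := by
  ext i
  simp only [sgdStep, dotProduct_sub, Pi.sub_apply, Pi.smul_apply, smul_eq_mul]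
  ring

lemma continuous_sgdStep (γ : ℝ) :
    Continuous fun p : (ι → ℝ) × (ι → ℝ) × ℝ => sgdStep γ p.1 p.2.1 p.2.2 := by
  unfold sgdStep
  fun_prop

end DotProduct

section Moments

variable {ι Ω : Type*} [Fintype ι] [MeasurableSpace Ω] {μ : Measure Ω}

lemma memLp_top_of_dotProduct_self_eq {X : Ω → ι → ℝ} {M : ℝ} (hX : AEStronglyMeasurable X μ)
    (hXM : ∀ᵐ ω ∂μ, X ω ⬝ᵥ X ω = M) : MemLp X ∞ μ := by
  refine memLp_top_of_bound hX (Real.sqrt M) ?_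
  filter_upwards [hXM] with ω hω
  refine (pi_norm_le_iff_of_nonneg (Real.sqrt_nonneg M)).2 fun i => ?_
  rw [Real.norm_eq_abs]
  exact Real.abs_le_sqrt (hω ▸ sq_apply_le_dotProduct_self _ i)

lemma MeasureTheory.MemLp.dotProduct_of_top_left {p : ℝ≥0∞} {X e : Ω → ι → ℝ}
    (hX : MemLp X ∞ μ) (he : MemLp e p μ) : MemLp (fun ω => X ω ⬝ᵥ e ω) p μ := by
  simp only [dotProduct]
  exact memLp_finsetSum _ fun i _ => (he.eval i).mul' (hX.eval i)

lemma MeasureTheory.MemLp.integrable_dotProduct {u v : Ω → ι → ℝ} (hu : MemLp u 2 μ)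
    (hv : MemLp v 2 μ) : Integrable (fun ω => u ω ⬝ᵥ v ω) μ := by
  simp only [dotProduct]
  exact integrable_finsetSum _ fun i _ => (hu.eval i).integrable_mul (hv.eval i)

lemma MeasureTheory.MemLp.sgdStep {θ X : Ω → ι → ℝ} {Y : Ω → ℝ} (hθ : MemLp θ 2 μ)
    (hX : MemLp X ∞ μ) (hY : MemLp Y 2 μ) (γ : ℝ) :
    MemLp (fun ω => sgdStep γ (θ ω) (X ω) (Y ω)) 2 μ :=
  hθ.sub (((hX.smul (hX.dotProduct_of_top_left hθ)).sub (hX.smul hY)).const_smul γ)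

lemma integral_dotProduct_mul_eq_zero_of_indepFun {e X : Ω → ι → ℝ} {ξ : Ω → ℝ}
    (he : MemLp e 2 μ) (hX : MemLp X ∞ μ) (hξ : MemLp ξ 2 μ)
    (hind : IndepFun e (fun ω => (X ω, ξ ω)) μ) (hcentered : ∀ i, ∫ ω, X ω i * ξ ω ∂μ = 0) :
    ∫ ω, (X ω ⬝ᵥ e ω) * ξ ω ∂μ = 0 := by
  have hXξ : ∀ i, MemLp (fun ω => X ω i * ξ ω) 2 μ := fun i => hξ.mul' (hX.eval i)
  have hsum : (fun ω => (X ω ⬝ᵥ e ω) * ξ ω) = fun ω => ∑ i, e ω i * (X ω i * ξ ω) := by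
    ext ω
    simp only [dotProduct, Finset.sum_mul]
    exact Finset.sum_congr rfl fun i _ => by ring
  rw [hsum, integral_finsetSum _ (f := fun i ω => e ω i * (X ω i * ξ ω))
    fun i _ => (he.eval i).integrable_mul (hXξ i)]
  refine Finset.sum_eq_zero fun i _ => ?_
  have hind_i : IndepFun (fun ω => e ω i) (fun ω => X ω i * ξ ω) μ :=
    hind.comp (measurable_pi_apply i)
      (((measurable_pi_apply i).comp measurable_fst).mul measurable_snd)
  rw [hind_i.integral_fun_mul_eq_mul_integral (he.eval i).1 (hXξ i).1, hcentered i, mul_zero]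

lemma integral_sgdStep_sub_sq_ge [IsFiniteMeasure μ] {θ X : Ω → ι → ℝ} {Y : Ω → ℝ}
    {θ' : ι → ℝ} {γ M : ℝ} (hθ : MemLp θ 2 μ) (hX : MemLp X ∞ μ)
    (hXM : ∀ᵐ ω ∂μ, X ω ⬝ᵥ X ω = M) (hY : MemLp Y 2 μ)
    (hind : IndepFun θ (fun ω => (X ω, Y ω)) μ)
    (hcentered : ∀ i, ∫ ω, X ω i * (X ω ⬝ᵥ θ' - Y ω) ∂μ = 0) (hγ : 0 ≤ γ) (hγM : 2 ≤ γ * M) :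
    ∫ ω, (θ ω - θ') ⬝ᵥ (θ ω - θ') ∂μ + γ ^ 2 * (M * ∫ ω, (X ω ⬝ᵥ θ' - Y ω) ^ 2 ∂μ) ≤
      ∫ ω, (sgdStep γ (θ ω) (X ω) (Y ω) - θ') ⬝ᵥ (sgdStep γ (θ ω) (X ω) (Y ω) - θ') ∂μ := by
  set e := fun ω => θ ω - θ'
  set ξ := fun ω => X ω ⬝ᵥ θ' - Y ω
  set u := fun ω => X ω ⬝ᵥ e ω
  simp only [sgdStep_sub]
  change ∫ ω, e ω ⬝ᵥ e ω ∂μ + γ ^ 2 * (M * ∫ ω, ξ ω ^ 2 ∂μ) ≤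
    ∫ ω, (e ω - (γ * (u ω + ξ ω)) • X ω) ⬝ᵥ (e ω - (γ * (u ω + ξ ω)) • X ω) ∂μ
  have he : MemLp e 2 μ := hθ.sub (memLp_const θ')
  have hξ : MemLp ξ 2 μ := (hX.dotProduct_of_top_left (memLp_const θ')).sub hY
  have hu : MemLp u 2 μ := hX.dotProduct_of_top_left he
  have hind' : IndepFun e (fun ω => (X ω, ξ ω)) μ :=
    hind.comp (measurable_id.sub_const θ')
      (measurable_fst.prodMk ((continuous_fst.dotProduct continuous_const).measurable.sub
        measurable_snd))
  have hstep : MemLp (fun ω => e ω - (γ * (u ω + ξ ω)) • X ω) 2 μ :=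
    he.sub (hX.smul ((hu.add hξ).const_mul γ))
  have hlower : ∀ᵐ ω ∂μ, (e ω ⬝ᵥ e ω + 2 * γ * (γ * M - 1) * (u ω * ξ ω)) + γ ^ 2 * M * ξ ω ^ 2
      ≤ (e ω - (γ * (u ω + ξ ω)) • X ω) ⬝ᵥ (e ω - (γ * (u ω + ξ ω)) • X ω) := by
    filter_upwards [hXM] with ω hω
    rw [dotProduct_self_sub_smul, hω]
    have : 0 ≤ γ * M - 2 := by linarith
    have : 0 ≤ γ * (γ * M - 2) * u ω ^ 2 := by positivity
    nlinarith
  have hint_e : Integrable (fun ω => e ω ⬝ᵥ e ω) μ := he.integrable_dotProduct he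
  have hint_uξ : Integrable (fun ω => u ω * ξ ω) μ := hu.integrable_mul hξ
  have hint_ξ : Integrable (fun ω => ξ ω ^ 2) μ := hξ.integrable_sq
  have hint_lower : Integrable (fun ω => e ω ⬝ᵥ e ω + 2 * γ * (γ * M - 1) * (u ω * ξ ω)) μ :=
    hint_e.add (hint_uξ.const_mul _)
  calc _ = ∫ ω, (e ω ⬝ᵥ e ω + 2 * γ * (γ * M - 1) * (u ω * ξ ω)) + γ ^ 2 * M * ξ ω ^ 2 ∂μ := by
        rw [integral_add hint_lower (hint_ξ.const_mul _),
          integral_add hint_e (hint_uξ.const_mul _), integral_const_mul, integral_const_mul,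
          integral_dotProduct_mul_eq_zero_of_indepFun he hX hξ hind' hcentered]
        ring
    _ ≤ _ := integral_mono_ae (hint_lower.add (hint_ξ.const_mul _))
        (hstep.integrable_dotProduct hstep) hlower

lemma integral_mul_dotProduct_sub_eq_zero_of_mulVec_eq {X : Ω → ι → ℝ} {Y : Ω → ℝ}
    {A : Matrix ι ι ℝ} {b θ : ι → ℝ} (hX : MemLp X 2 μ) (hY : MemLp Y 2 μ)
    (hA : ∀ i j, A i j = ∫ ω, X ω i * X ω j ∂μ) (hb : ∀ i, b i = ∫ ω, X ω i * Y ω ∂μ)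
    (hθ : A *ᵥ θ = b) (i : ι) : ∫ ω, X ω i * (X ω ⬝ᵥ θ - Y ω) ∂μ = 0 := by
  have hXX : ∀ j, Integrable (fun ω => θ j * (X ω i * X ω j)) μ := fun j =>
    ((hX.eval i).integrable_mul (hX.eval j)).const_mul _
  have hXY : Integrable (fun ω => X ω i * Y ω) μ := (hX.eval i).integrable_mul hY
  have hexpand : (fun ω => X ω i * (X ω ⬝ᵥ θ - Y ω)) =
      fun ω => ∑ j, θ j * (X ω i * X ω j) - X ω i * Y ω := by
    ext ω
    simp only [dotProduct, mul_sub, Finset.mul_sum]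
    exact congrArg₂ _ (Finset.sum_congr rfl fun j _ => by ring) rfl
  rw [hexpand, integral_sub (integrable_finsetSum _ fun j _ => hXX j) hXY,
    integral_finsetSum _ fun j _ => hXX j, ← hb i, ← hθ]
  simp only [integral_const_mul, ← hA, mulVec, dotProduct, mul_comm, sub_self]

lemma trace_eq_mul_integral_sq [IsFiniteMeasure μ] {X : Ω → ι → ℝ} {Y : Ω → ℝ} {θ : ι → ℝ}
    {M : ℝ} {S : Matrix ι ι ℝ} (hX : MemLp X ∞ μ) (hXM : ∀ᵐ ω ∂μ, X ω ⬝ᵥ X ω = M)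
    (hY : MemLp Y 2 μ)
    (hS : ∀ i j, S i j = ∫ ω, ((X ω ⬝ᵥ θ) * X ω i - Y ω * X ω i) *
      ((X ω ⬝ᵥ θ) * X ω j - Y ω * X ω j) ∂μ) :
    S.trace = M * ∫ ω, (X ω ⬝ᵥ θ - Y ω) ^ 2 ∂μ := by
  have hξX : ∀ i, MemLp (fun ω => (X ω ⬝ᵥ θ - Y ω) * X ω i) 2 μ := fun i =>
    (hX.eval i).mul ((hX.dotProduct_of_top_left (memLp_const θ)).sub hY)
  have hdiag : ∀ i, S i i = ∫ ω, ((X ω ⬝ᵥ θ - Y ω) * X ω i) ^ 2 ∂μ := fun i => by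
    rw [hS i i]
    exact integral_congr_ae (.of_forall fun ω => by ring)
  change ∑ i, S i i = _
  rw [Finset.sum_congr rfl fun i _ => hdiag i,
    ← integral_finsetSum _ fun i _ => (hξX i).integrable_sq, ← integral_const_mul]
  refine integral_congr_ae ?_
  filter_upwards [hXM] with ω hω
  rw [← hω]
  simp only [dotProduct, Finset.sum_mul]
  exact Finset.sum_congr rfl fun i _ => by ring

end Moments

lemma ProbabilityTheory.IdentDistrib.integral_comp_eq {α β γ : Type*} [MeasurableSpace α]
    [MeasurableSpace β] [MeasurableSpace γ] {μ : Measure α} {ν : Measure β} {f : α → γ}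
    {g : β → γ} (h : IdentDistrib f g μ ν) {u : γ → ℝ} (hu : Measurable u) :
    ∫ a, u (f a) ∂μ = ∫ b, u (g b) ∂ν :=
  (h.comp hu).integral_eq

lemma ProbabilityTheory.iIndepFun.indepFun_of_measurable_biSup_Iic {Ω κ β γ : Type*}
    [MeasurableSpace Ω] {μ : Measure Ω} [Preorder κ] [mβ : MeasurableSpace β] [MeasurableSpace γ]
    {Z : κ → Ω → β} (hZ : ∀ k, Measurable (Z k)) (hind : iIndepFun Z μ) {f : Ω → γ} {s t : κ}
    (hst : s < t) (hf : Measurable[⨆ k ∈ Set.Iic s, mβ.comap (Z k)] f) :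
    IndepFun f (Z t) μ := by
  rw [IndepFun_iff_Indep]
  have hdisj : Disjoint (Set.Iic s) {t} :=
    Set.disjoint_singleton_right.2 fun h => lt_irrefl _ (hst.trans_le h)
  exact indep_of_indep_of_le_right
    (indep_of_indep_of_le_left (indep_iSup_of_disjoint (fun k => (hZ k).comap_le) hind.iIndep hdisj)
      hf.comap_le) (le_biSup (fun k => mβ.comap (Z k)) (Set.mem_singleton t))

section Iterates

variable {ι Ω : Type*} [Fintype ι] {x : ℕ → Ω → ι → ℝ} {y : ℕ → Ω → ℝ} {γ : ℕ → ℝ}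
  {θ : ℕ → Ω → ι → ℝ} {θ₀ : ι → ℝ}

lemma measurable_biSup_Iic_of_sgdStep (hθ0 : ∀ ω, θ 0 ω = θ₀)
    (hθ : ∀ t ω, θ (t + 1) ω = sgdStep (γ (t + 1)) (θ t ω) (x (t + 1) ω) (y (t + 1) ω))
    (t : ℕ) :
    Measurable[⨆ s ∈ Set.Iic t, MeasurableSpace.comap (fun ω => (x s ω, y s ω)) inferInstance]
      (θ t) := by
  induction t with
  | zero =>
    rw [funext hθ0]
    exact measurable_const
  | succ t ih =>
    have hpast : Measurable[⨆ s ∈ Set.Iic (t + 1),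
        MeasurableSpace.comap (fun ω => (x s ω, y s ω)) inferInstance] (θ t) :=
      ih.mono (biSup_mono fun s hs => le_trans hs t.le_succ) le_rfl
    have hnew : Measurable[⨆ s ∈ Set.Iic (t + 1),
        MeasurableSpace.comap (fun ω => (x s ω, y s ω)) inferInstance]
        (fun ω => (x (t + 1) ω, y (t + 1) ω)) :=
      Measurable.of_comap_le
        (le_biSup (fun s => MeasurableSpace.comap (fun ω => (x s ω, y s ω)) inferInstance)
          (Set.mem_Iic.2 le_rfl))
    rw [funext (hθ t)]
    exact (continuous_sgdStep _).measurable.comp (hpast.prodMk hnew)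

lemma memLp_of_sgdStep [MeasurableSpace Ω] {μ : Measure Ω} [IsFiniteMeasure μ]
    (hθ0 : ∀ ω, θ 0 ω = θ₀)
    (hθ : ∀ t ω, θ (t + 1) ω = sgdStep (γ (t + 1)) (θ t ω) (x (t + 1) ω) (y (t + 1) ω))
    (hx : ∀ t, MemLp (x (t + 1)) ∞ μ) (hy : ∀ t, MemLp (y (t + 1)) 2 μ) (t : ℕ) :
    MemLp (θ t) 2 μ := by
  induction t with
  | zero =>
    rw [funext hθ0]
    exact memLp_const θ₀
  | succ t ih =>
    rw [funext (hθ t)]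
    exact ih.sgdStep (hx t) (hy t) _

end Iterates

lemma tendsto_atTop_of_add_le_succ {a : ℕ → ℝ} {c : ℝ} (hc : 0 < c)
    (h : ∀ t, a t + c ≤ a (t + 1)) : Tendsto a atTop atTop := by
  have hlin : ∀ t : ℕ, a 0 + c * t ≤ a t := by
    intro t
    induction t with
    | zero => simp
    | succ t ih => push_cast; linarith [h t]
  exact tendsto_atTop_mono hlin
    (tendsto_atTop_add_const_left _ _ (tendsto_natCast_atTop_atTop.const_mul_atTop hc))

theorem sgd_divergence_large_learning_rate_general {n : ℕ}
    {Ω : Type*} [MeasurableSpace Ω] (μ : Measure Ω) [IsProbabilityMeasure μ]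
    (x : ℕ → Ω → Fin n → ℝ) (y : ℕ → Ω → ℝ)
    (hxm : ∀ t : ℕ, Measurable (x t)) (hym : ∀ t : ℕ, Measurable (y t))
    (hyL2 : ∀ t : ℕ, MemLp (y t) 2 μ)
    (hindep : iIndepFun
      (fun t ω => (x t ω, y t ω)) μ)
    (hident : ∀ t : ℕ, 1 ≤ t →
      IdentDistrib (fun ω => (x t ω, y t ω)) (fun ω => (x 1 ω, y 1 ω)) μ μ)
    (M : ℝ) (hM : 0 < M)
    (hnorm : ∀ t : ℕ, 1 ≤ t → ∀ᵐ ω ∂μ, x t ω ⬝ᵥ x t ω = M)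
    (A : Matrix (Fin n) (Fin n) ℝ)
    (hA : ∀ i j, A i j = ∫ ω, x 1 ω i * x 1 ω j ∂μ)
    (hApd : A.PosDef)
    (b : Fin n → ℝ) (hb : ∀ i, b i = ∫ ω, x 1 ω i * y 1 ω ∂μ)
    (θstar : Fin n → ℝ) (hθstar : θstar = A⁻¹ *ᵥ b)
    (S : Matrix (Fin n) (Fin n) ℝ)
    (hSdef : ∀ i j, S i j = ∫ ω,
      ((x 1 ω ⬝ᵥ θstar) * x 1 ω i - y 1 ω * x 1 ω i) *
        ((x 1 ω ⬝ᵥ θstar) * x 1 ω j - y 1 ω * x 1 ω j) ∂μ)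
    (hStrPos : 0 < S.trace)
    (γ : ℕ → ℝ) (δ : ℝ) (hδ : 0 < δ)
    (hγ : ∀ t : ℕ, 1 ≤ t → 2 / M + δ ≤ γ t)
    (θ : ℕ → Ω → Fin n → ℝ)
    (hθ0 : ∀ ω, θ 0 ω = θstar)
    (hθrec : ∀ t : ℕ, 1 ≤ t → ∀ ω,
      θ t ω = θ (t - 1) ω - γ t • ((x t ω ⬝ᵥ θ (t - 1) ω) • x t ω - y t ω • x t ω)) :
    Tendsto (fun t : ℕ => ∫ ω, (θ t ω - θstar) ⬝ᵥ (θ t ω - θstar) ∂μ) atTop atTop := by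
  have hθ : ∀ t ω, θ (t + 1) ω = sgdStep (γ (t + 1)) (θ t ω) (x (t + 1) ω) (y (t + 1) ω) :=
    fun t => hθrec (t + 1) t.succ_pos
  have hx : ∀ t, 1 ≤ t → MemLp (x t) ∞ μ := fun t ht =>
    memLp_top_of_dotProduct_self_eq (hxm t).aestronglyMeasurable (hnorm t ht)
  have hAθ : A *ᵥ θstar = b := by
    rw [hθstar, mulVec_mulVec, mul_nonsing_inv _ ((isUnit_iff_isUnit_det A).1 hApd.isUnit),
      one_mulVec]
  have hcentered : ∀ t, 1 ≤ t → ∀ i, ∫ ω, x t ω i * (x t ω ⬝ᵥ θstar - y t ω) ∂μ = 0 :=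
    fun t ht i => by
      rw [(hident t ht).integral_comp_eq (u := fun p => p.1 i * (p.1 ⬝ᵥ θstar - p.2)) (by fun_prop)]
      exact integral_mul_dotProduct_sub_eq_zero_of_mulVec_eq
        ((hx 1 le_rfl).mono_exponent le_top) (hyL2 1) hA hb hAθ i
  have htrace : ∀ t, 1 ≤ t → S.trace = M * ∫ ω, (x t ω ⬝ᵥ θstar - y t ω) ^ 2 ∂μ :=
    fun t ht => by
      rw [(hident t ht).integral_comp_eq (u := fun p => (p.1 ⬝ᵥ θstar - p.2) ^ 2) (by fun_prop)]
      exact trace_eq_mul_integral_sq (hx 1 le_rfl) (hnorm 1 le_rfl) (hyL2 1) hSdef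
  refine tendsto_atTop_of_add_le_succ (c := (2 / M + δ) ^ 2 * S.trace)
    (mul_pos (by positivity) hStrPos) fun t => ?_
  have hγt := hγ (t + 1) t.succ_pos
  have hγM : 2 ≤ γ (t + 1) * M := by
    rw [← div_mul_cancel₀ 2 hM.ne']
    nlinarith
  calc _ ≤ ∫ ω, (θ t ω - θstar) ⬝ᵥ (θ t ω - θstar) ∂μ + γ (t + 1) ^ 2 * S.trace := by gcongr
    _ = ∫ ω, (θ t ω - θstar) ⬝ᵥ (θ t ω - θstar) ∂μ
        + γ (t + 1) ^ 2 * (M * ∫ ω, (x (t + 1) ω ⬝ᵥ θstar - y (t + 1) ω) ^ 2 ∂μ) := by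
      rw [← htrace (t + 1) t.succ_pos]
    _ ≤ _ := integral_sgdStep_sub_sq_ge
        (memLp_of_sgdStep hθ0 hθ (fun t => hx (t + 1) t.succ_pos) (fun t => hyL2 (t + 1)) t)
        (hx (t + 1) t.succ_pos) (hnorm (t + 1) t.succ_pos) (hyL2 (t + 1))
        (hindep.indepFun_of_measurable_biSup_Iic (fun t => (hxm t).prodMk (hym t))
          t.lt_succ_self (measurable_biSup_Iic_of_sgdStep hθ0 hθ t))
        (hcentered (t + 1) t.succ_pos) ((by positivity : 0 ≤ 2 / M + δ).trans hγt) hγM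
    _ = _ := by simp only [hθ]

/-- Divergence of SGD for linear regression: if every example `x` has squared norm `M`
and the learning rate stays above `2/M` by a fixed margin, `E‖θ_t - θ*‖²` diverges. -/
theorem sgd_divergence_large_learning_rate {n : ℕ}
    {Ω : Type*} [MeasurableSpace Ω] (μ : Measure Ω) [IsProbabilityMeasure μ]
    (x : ℕ → Ω → Fin n → ℝ) (y : ℕ → Ω → ℝ)
    (hxm : ∀ t : ℕ, Measurable (x t)) (hym : ∀ t : ℕ, Measurable (y t))
    (hyL2 : ∀ t : ℕ, MemLp (y t) 2 μ)
    (hindep : iIndepFun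
      (fun t ω => (x t ω, y t ω)) μ)
    (hident : ∀ t : ℕ, 1 ≤ t →
      IdentDistrib (fun ω => (x t ω, y t ω)) (fun ω => (x 1 ω, y 1 ω)) μ μ)
    (M : ℝ) (hM : 0 < M)
    (hnorm : ∀ t : ℕ, 1 ≤ t → ∀ᵐ ω ∂μ, x t ω ⬝ᵥ x t ω = M)
    (A : Matrix (Fin n) (Fin n) ℝ)
    (hA : ∀ i j, A i j = ∫ ω, x 1 ω i * x 1 ω j ∂μ)
    (hApd : A.PosDef)
    (lam0 : ℝ) (hlam0 : 0 < lam0)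
    (hlo : ∀ v : Fin n → ℝ, lam0 * (v ⬝ᵥ v) ≤ v ⬝ᵥ A *ᵥ v)
    (b : Fin n → ℝ) (hb : ∀ i, b i = ∫ ω, x 1 ω i * y 1 ω ∂μ)
    (θstar : Fin n → ℝ) (hθstar : θstar = A⁻¹ *ᵥ b)
    (S : Matrix (Fin n) (Fin n) ℝ)
    (hSdef : ∀ i j, S i j = ∫ ω,
      ((x 1 ω ⬝ᵥ θstar) * x 1 ω i - y 1 ω * x 1 ω i) *
        ((x 1 ω ⬝ᵥ θstar) * x 1 ω j - y 1 ω * x 1 ω j) ∂μ)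
    (hStrPos : 0 < S.trace)
    (γ : ℕ → ℝ) (δ : ℝ) (hδ : 0 < δ)
    (hγ : ∀ t : ℕ, 1 ≤ t → 2 / M + δ ≤ γ t)
    (θ : ℕ → Ω → Fin n → ℝ)
    (hθ0 : ∀ ω, θ 0 ω = θstar)
    (hθrec : ∀ t : ℕ, 1 ≤ t → ∀ ω,
      θ t ω = θ (t - 1) ω - γ t • ((x t ω ⬝ᵥ θ (t - 1) ω) • x t ω - y t ω • x t ω)) :
    Tendsto (fun t : ℕ => ∫ ω, (θ t ω - θstar) ⬝ᵥ (θ t ω - θstar) ∂μ) atTop atTop :=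
  sgd_divergence_large_learning_rate_general μ x y hxm hym hyL2 hindep hident M hM hnorm A hA hApd b
    hb θstar hθstar S hSdef hStrPos γ δ hδ hγ θ hθ0 hθrec
end

section
/- Let (x_t, y_t)_{t≥1} be an i.i.d. sequence of random pairs in ℝ^n × ℝ with ‖x_t‖² = M almost surely for a constant M > 0; suppose A = E(x·xᵀ) is positive definite, set b = E(x·y), θ* = A⁻¹b, S = E((x·xᵀ·θ* − x·y)(x·xᵀ·θ* − x·y)ᵀ), and u = E(x·xᵀ·(x·xᵀ·θ* − x·y)). Let θ_t = θ_{t−1} − γ_t·(x_t·x_tᵀ·θ_{t−1} − x_t·y_t) with (γ_t) deterministic and θ_0 deterministic, let ℱ_{t−1} be the σ-algebra generated by (x_1, y_1), …, (x_{t−1}, y_{t−1}), and write Δ_t = θ_t − θ*. Then almost surely: E(‖Δ_t‖² | ℱ_{t−1}) = ‖Δ_{t−1}‖² − (2γ_t − M·γ_t²)·‖Δ_{t−1}‖_A² + γ_t²·tr(S) + 2γ_t²·uᵀΔ_{t−1}. -/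
open Matrix MeasureTheory ProbabilityTheory

/-!
Write `Δ = θ_{t-1} - θ*` and `ξ = x xᵀ θ* - x y`. The update reads `Δ_t = (1 - γ x xᵀ) Δ - γ ξ`,
so, using `‖x‖² = M`,
`‖Δ_t‖² = Δᵀ (1 - (2γ - Mγ²) x xᵀ) Δ + Δᵀ (-2γ ξ + 2γ² (xᵀξ) x) + γ² ‖ξ‖²`.
Conditionally on the past, `Δ` is frozen while `(x, y)` is a fresh sample independent of it, so
each random coefficient may be replaced by its mean: `E[x xᵀ] = A`, `E[ξ] = A θ* - b = 0`,
`E[(xᵀξ) x] = u` and `E ‖ξ‖² = tr S`.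
-/

section CondExpIndep

variable {Ω : Type*} {m mZ m0 : MeasurableSpace Ω} {μ : Measure Ω}

lemma ProbabilityTheory.Indep.indepFun_of_measurable (hindep : Indep mZ m μ) {c Z : Ω → ℝ}
    (hc : Measurable[m] c) (hZ : Measurable[mZ] Z) : IndepFun c Z μ :=
  (IndepFun_iff_Indep c Z μ).2 <|
    indep_of_indep_of_le_right (indep_of_indep_of_le_left hindep.symm hc.comap_le) hZ.comap_le

lemma integrable_dotProduct_of_indep {κ : Type*} [Fintype κ] (hindep : Indep mZ m μ)
    {c Z : Ω → κ → ℝ} (hc : ∀ k, Measurable[m] fun ω => c ω k)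
    (hZ : ∀ k, Measurable[mZ] fun ω => Z ω k)
    (hci : ∀ k, Integrable (fun ω => c ω k) μ) (hZi : ∀ k, Integrable (fun ω => Z ω k) μ) :
    Integrable (fun ω => c ω ⬝ᵥ Z ω) μ :=
  integrable_finsetSum _ fun k _ =>
    (hindep.indepFun_of_measurable (hc k) (hZ k)).integrable_mul (hci k) (hZi k)

variable [IsFiniteMeasure μ]

lemma condExp_mul_of_indep (hm : m ≤ m0) (hmZ : mZ ≤ m0) (hindep : Indep mZ m μ)
    {c Z : Ω → ℝ} (hc : Measurable[m] c) (hZ : Measurable[mZ] Z)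
    (hci : Integrable c μ) (hZi : Integrable Z μ) :
    μ[c * Z | m] =ᵐ[μ] c * fun _ => μ[Z] := by
  filter_upwards [condExp_mul_of_stronglyMeasurable_left hc.stronglyMeasurable
      ((hindep.indepFun_of_measurable hc hZ).integrable_mul hci hZi) hZi,
    condExp_indep_eq hmZ hm hZ.stronglyMeasurable hindep] with ω hmul hZω
  rw [hmul, Pi.mul_apply, hZω, Pi.mul_apply]

lemma condExp_dotProduct_of_indep {κ : Type*} [Fintype κ] (hm : m ≤ m0) (hmZ : mZ ≤ m0)
    (hindep : Indep mZ m μ) {c Z : Ω → κ → ℝ}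
    (hc : ∀ k, Measurable[m] fun ω => c ω k) (hZ : ∀ k, Measurable[mZ] fun ω => Z ω k)
    (hci : ∀ k, Integrable (fun ω => c ω k) μ) (hZi : ∀ k, Integrable (fun ω => Z ω k) μ) :
    μ[fun ω => c ω ⬝ᵥ Z ω | m] =ᵐ[μ] fun ω => c ω ⬝ᵥ fun k => μ[fun ω => Z ω k] := by
  have hsum : (fun ω => c ω ⬝ᵥ Z ω) = ∑ k, (fun ω => c ω k) * fun ω => Z ω k := by
    ext ω; simp [dotProduct]
  rw [hsum]
  filter_upwards [condExp_finsetSum (s := Finset.univ) (fun k _ =>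
      (hindep.indepFun_of_measurable (hc k) (hZ k)).integrable_mul (hci k) (hZi k)) m,
    ae_all_iff.2 fun k => condExp_mul_of_indep hm hmZ hindep (hc k) (hZ k) (hci k) (hZi k)]
    with ω hsumω htermω
  rw [hsumω, Finset.sum_apply]
  simp only [htermω, Pi.mul_apply, dotProduct]

lemma dotProduct_mulVec_eq_dotProduct_prod {ι R : Type*} [Fintype ι] [CommSemiring R]
    (v w : ι → R) (A : Matrix ι ι R) :
    v ⬝ᵥ A *ᵥ w = (fun p : ι × ι => v p.1 * w p.2) ⬝ᵥ fun p => A p.1 p.2 := by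
  simp only [dotProduct, mulVec, Fintype.sum_prod_type, Finset.mul_sum]
  exact Finset.sum_congr rfl fun i _ => Finset.sum_congr rfl fun j _ => by ring

lemma condExp_quadratic_of_indep {ι : Type*} [Fintype ι] (hm : m ≤ m0) (hmZ : mZ ≤ m0)
    (hindep : Indep mZ m μ) {D w : Ω → ι → ℝ} {P : Ω → Matrix ι ι ℝ} {c : Ω → ℝ}
    (hD : ∀ i, Measurable[m] fun ω => D ω i) (hDL2 : ∀ i, MemLp (fun ω => D ω i) 2 μ)
    (hP : ∀ i j, Measurable[mZ] fun ω => P ω i j)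
    (hPi : ∀ i j, Integrable (fun ω => P ω i j) μ)
    (hw : ∀ i, Measurable[mZ] fun ω => w ω i) (hwi : ∀ i, Integrable (fun ω => w ω i) μ)
    (hc : Measurable[mZ] c) (hci : Integrable c μ) :
    μ[fun ω => D ω ⬝ᵥ P ω *ᵥ D ω + D ω ⬝ᵥ w ω + c ω | m] =ᵐ[μ]
      fun ω => D ω ⬝ᵥ (of fun i j => μ[fun ω => P ω i j]) *ᵥ D ω
        + D ω ⬝ᵥ (fun i => μ[fun ω => w ω i]) + μ[c] := by
  have hDD (p : ι × ι) : Measurable[m] fun ω => D ω p.1 * D ω p.2 := (hD p.1).mul (hD p.2)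
  have hDDi (p : ι × ι) : Integrable (fun ω => D ω p.1 * D ω p.2) μ :=
    (hDL2 p.1).integrable_mul (hDL2 p.2)
  have hDi (i : ι) : Integrable (fun ω => D ω i) μ := (hDL2 i).integrable one_le_two
  have hquadi := integrable_dotProduct_of_indep hindep hDD (fun p => hP p.1 p.2) hDDi
    fun p => hPi p.1 p.2
  have hlini := integrable_dotProduct_of_indep hindep hD hw hDi hwi
  simp only [dotProduct_mulVec_eq_dotProduct_prod]
  filter_upwards [condExp_add (hquadi.add hlini) hci m, condExp_add hquadi hlini m,
    condExp_dotProduct_of_indep hm hmZ hindep hDD (fun p => hP p.1 p.2) hDDi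
      fun p => hPi p.1 p.2,
    condExp_dotProduct_of_indep hm hmZ hindep hD hw hDi hwi,
    condExp_indep_eq hmZ hm hc.stronglyMeasurable hindep] with ω h1 h2 h3 h4 h5
  refine h1.trans ?_
  rw [Pi.add_apply, h2, Pi.add_apply, h3, h4, h5]
  rfl

end CondExpIndep

section LeastSquares

variable {ι : Type*} [Fintype ι]

-- The gradient in `θ` of the squared loss `(θᵀv - y)² / 2` at the example `(v, y)`.
def lsqGrad (θ v : ι → ℝ) (y : ℝ) : ι → ℝ := (v ⬝ᵥ θ) • v - y • v

lemma lsqGrad_apply (θ v : ι → ℝ) (y : ℝ) (i : ι) :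
    lsqGrad θ v y i = (v ⬝ᵥ θ) * v i - y * v i := rfl

@[fun_prop]
lemma Measurable.lsqGrad {α : Type*} {mα : MeasurableSpace α} {θ v : α → ι → ℝ} {y : α → ℝ}
    (hθ : Measurable θ) (hv : Measurable v) (hy : Measurable y) :
    Measurable fun a => _root_.lsqGrad (θ a) (v a) (y a) := by
  unfold _root_.lsqGrad; fun_prop

lemma lsqGrad_eq_add (θ θ' v : ι → ℝ) (y : ℝ) :
    lsqGrad θ v y = (v ⬝ᵥ (θ - θ')) • v + lsqGrad θ' v y := by
  simp only [lsqGrad, dotProduct_sub, sub_smul]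
  abel

lemma dotProduct_vecMulVec_mulVec_s16 (v w : ι → ℝ) :
    w ⬝ᵥ vecMulVec v v *ᵥ w = (v ⬝ᵥ w) ^ 2 := by
  simp [vecMulVec_mulVec, dotProduct_comm w v, sq]

lemma dotProduct_self_sgd_step_sub [DecidableEq ι] (θ θ' v : ι → ℝ) {y γ M : ℝ}
    (hv : v ⬝ᵥ v = M) :
    (θ - γ • lsqGrad θ v y - θ') ⬝ᵥ (θ - γ • lsqGrad θ v y - θ')
      = (θ - θ') ⬝ᵥ (1 - (2 * γ - M * γ ^ 2) • vecMulVec v v) *ᵥ (θ - θ')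
        + (θ - θ') ⬝ᵥ (-(2 * γ) • lsqGrad θ' v y + (2 * γ ^ 2) • ((v ⬝ᵥ lsqGrad θ' v y) • v))
        + γ ^ 2 * (lsqGrad θ' v y ⬝ᵥ lsqGrad θ' v y) := by
  have hstep : θ - γ • lsqGrad θ v y - θ'
      = θ - θ' - γ • ((v ⬝ᵥ (θ - θ')) • v + lsqGrad θ' v y) := by
    rw [lsqGrad_eq_add θ θ']; abel
  rw [hstep]
  generalize θ - θ' = d
  generalize lsqGrad θ' v y = ξ
  simp only [sub_mulVec, one_mulVec, smul_mulVec, dotProduct_vecMulVec_mulVec_s16, sub_dotProduct,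
    dotProduct_sub, add_dotProduct, dotProduct_add, smul_dotProduct, dotProduct_smul, smul_eq_mul]
  rw [dotProduct_comm d v, dotProduct_comm ξ d, dotProduct_comm ξ v, hv]
  ring

end LeastSquares

section Moments

variable {Ω ι : Type*} [Fintype ι] {m0 : MeasurableSpace Ω} {μ : Measure Ω}

lemma memLp_dotProduct {p q r : ENNReal} [p.HolderTriple q r] {v w : Ω → ι → ℝ}
    (hv : ∀ i, MemLp (fun ω => v ω i) p μ) (hw : ∀ i, MemLp (fun ω => w ω i) q μ) :
    MemLp (fun ω => v ω ⬝ᵥ w ω) r μ :=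
  memLp_finsetSum _ fun i _ => (hw i).mul (hv i)

lemma memLp_top_apply_of_dotProduct_self_eq {X : Ω → ι → ℝ} (hX : Measurable X) {M : ℝ}
    (hXX : ∀ᵐ ω ∂μ, X ω ⬝ᵥ X ω = M) (i : ι) : MemLp (fun ω => X ω i) ⊤ μ := by
  refine memLp_top_of_bound ((measurable_pi_apply i).comp hX).aestronglyMeasurable √M ?_
  filter_upwards [hXX] with ω hω
  rw [Real.norm_eq_abs, ← hω]
  exact Real.abs_le_sqrt (sq (X ω i) ▸ Finset.single_le_sum (f := fun j => X ω j * X ω j)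
    (fun j _ => mul_self_nonneg _) (Finset.mem_univ i))

lemma memLp_lsqGrad_apply {θ X : Ω → ι → ℝ} {Y : Ω → ℝ}
    (hθ : ∀ i, MemLp (fun ω => θ ω i) 2 μ) (hX : ∀ i, MemLp (fun ω => X ω i) ⊤ μ)
    (hY : MemLp Y 2 μ) (i : ι) :
    MemLp (fun ω => lsqGrad (θ ω) (X ω) (Y ω) i) 2 μ :=
  ((hX i).mul (memLp_dotProduct (r := 2) hX hθ)).sub ((hX i).mul hY)

lemma integral_lsqGrad_apply {X : Ω → ι → ℝ} {Y : Ω → ℝ} {A : Matrix ι ι ℝ} {b : ι → ℝ}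
    (hA : ∀ i j, A i j = ∫ ω, X ω i * X ω j ∂μ) (hb : ∀ i, b i = ∫ ω, X ω i * Y ω ∂μ)
    (hXX : ∀ i j, Integrable (fun ω => X ω i * X ω j) μ)
    (hXY : ∀ i, Integrable (fun ω => X ω i * Y ω) μ) (θ : ι → ℝ) (i : ι) :
    ∫ ω, lsqGrad θ (X ω) (Y ω) i ∂μ = (A *ᵥ θ - b) i := by
  have hexpand (ω : Ω) :
      lsqGrad θ (X ω) (Y ω) i = ∑ j, θ j * (X ω i * X ω j) - X ω i * Y ω := by
    rw [lsqGrad_apply, dotProduct, Finset.sum_mul]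
    congr 1
    · exact Finset.sum_congr rfl fun j _ => by ring
    · ring
  simp only [hexpand]
  rw [integral_sub (integrable_finsetSum _ fun j _ => (hXX i j).const_mul _) (hXY i),
    integral_finsetSum _ fun j _ => (hXX i j).const_mul _]
  simp only [integral_const_mul, Pi.sub_apply, mulVec, dotProduct, hA, hb, mul_comm]

lemma integral_dotProduct_self_eq_trace {ξ : Ω → ι → ℝ} {S : Matrix ι ι ℝ}
    (hξ : ∀ i, MemLp (fun ω => ξ ω i) 2 μ) (hS : ∀ i, S i i = ∫ ω, ξ ω i * ξ ω i ∂μ) :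
    ∫ ω, ξ ω ⬝ᵥ ξ ω ∂μ = S.trace := by
  have hξξ (i : ι) : Integrable (fun ω => ξ ω i * ξ ω i) μ := (hξ i).integrable_mul (hξ i)
  simp only [dotProduct]
  rw [integral_finsetSum _ fun i _ => hξξ i]
  simp only [trace, diag, hS]

end Moments

lemma integral_one_sub_smul_vecMulVec {Ω ι : Type*} [DecidableEq ι] {m0 : MeasurableSpace Ω}
    {μ : Measure Ω} [IsProbabilityMeasure μ]
    {X : Ω → ι → ℝ} {A : Matrix ι ι ℝ} (hA : ∀ i j, A i j = ∫ ω, X ω i * X ω j ∂μ)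
    (hXX : ∀ i j, Integrable (fun ω => X ω i * X ω j) μ) (K : ℝ) :
    (of fun i j => ∫ ω, (1 - K • vecMulVec (X ω) (X ω)) i j ∂μ) = 1 - K • A := by
  ext i j
  simp only [of_apply, Matrix.sub_apply, Matrix.smul_apply, vecMulVec_apply, smul_eq_mul, hA]
  rw [integral_sub (integrable_const _) ((hXX i j).const_mul K), integral_const,
    integral_const_mul]
  simp

lemma condExp_sgd_step_sq_dist {Ω ι : Type*} [Fintype ι] [DecidableEq ι]
    {m mZ m0 : MeasurableSpace Ω} {μ : Measure Ω} [IsProbabilityMeasure μ]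
    (hm : m ≤ m0) (hmZ : mZ ≤ m0) (hindep : Indep mZ m μ)
    {X : Ω → ι → ℝ} {Y : Ω → ℝ} (hX : Measurable[mZ] X) (hY : Measurable[mZ] Y)
    {M : ℝ} (hXX : ∀ᵐ ω ∂μ, X ω ⬝ᵥ X ω = M) (hYL2 : MemLp Y 2 μ)
    {θ : Ω → ι → ℝ} (hθ : Measurable[m] θ) (hθL2 : ∀ i, MemLp (fun ω => θ ω i) 2 μ)
    (θ' : ι → ℝ) (γ : ℝ) {A S : Matrix ι ι ℝ} {u : ι → ℝ}
    (hA : ∀ i j, A i j = ∫ ω, X ω i * X ω j ∂μ)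
    (hmean : ∀ i, ∫ ω, lsqGrad θ' (X ω) (Y ω) i ∂μ = 0)
    (hS : ∀ i, S i i = ∫ ω, lsqGrad θ' (X ω) (Y ω) i * lsqGrad θ' (X ω) (Y ω) i ∂μ)
    (hu : ∀ i, u i = ∫ ω, (X ω ⬝ᵥ lsqGrad θ' (X ω) (Y ω)) * X ω i ∂μ) :
    μ[fun ω => (θ ω - γ • lsqGrad (θ ω) (X ω) (Y ω) - θ') ⬝ᵥ
        (θ ω - γ • lsqGrad (θ ω) (X ω) (Y ω) - θ') | m] =ᵐ[μ]
      fun ω => (θ ω - θ') ⬝ᵥ (θ ω - θ')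
        - (2 * γ - M * γ ^ 2) * ((θ ω - θ') ⬝ᵥ A *ᵥ (θ ω - θ'))
        + γ ^ 2 * S.trace + 2 * γ ^ 2 * (u ⬝ᵥ (θ ω - θ')) := by
  have hXi : ∀ i, MemLp (fun ω => X ω i) ⊤ μ :=
    memLp_top_apply_of_dotProduct_self_eq (hX.mono hmZ le_rfl) hXX
  have hXXi (i j : ι) : Integrable (fun ω => X ω i * X ω j) μ :=
    ((hXi j).mul (hXi i)).integrable le_top
  have hξ : ∀ i, MemLp (fun ω => lsqGrad θ' (X ω) (Y ω) i) 2 μ :=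
    memLp_lsqGrad_apply (fun _ => memLp_const _) hXi hYL2
  have hXξ (i : ι) : MemLp (fun ω => (X ω ⬝ᵥ lsqGrad θ' (X ω) (Y ω)) * X ω i) 2 μ :=
    (hXi i).mul (memLp_dotProduct (r := 2) hXi hξ)
  have hwmean : (fun i => ∫ ω, (-(2 * γ) • lsqGrad θ' (X ω) (Y ω)
      + (2 * γ ^ 2) • ((X ω ⬝ᵥ lsqGrad θ' (X ω) (Y ω)) • X ω)) i ∂μ) = (2 * γ ^ 2) • u := by
    ext i
    simp only [Pi.add_apply, Pi.smul_apply, smul_eq_mul]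
    rw [integral_add (((hξ i).integrable one_le_two).const_mul _)
      (((hXξ i).integrable one_le_two).const_mul _), integral_const_mul, integral_const_mul,
      hmean, ← hu]
    simp
  refine (condExp_congr_ae (hXX.mono fun ω hω =>
    dotProduct_self_sgd_step_sub (θ ω) θ' (X ω) hω)).trans ?_
  refine (condExp_quadratic_of_indep hm hmZ hindep ?_ ?_ ?_ ?_ ?_ ?_ ?_ ?_).trans ?_
  · fun_prop
  · exact fun i => (hθL2 i).sub (memLp_const _)
  · intro i j
    simp only [Matrix.sub_apply, Matrix.smul_apply, vecMulVec_apply, smul_eq_mul]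
    fun_prop
  · intro i j
    simp only [Matrix.sub_apply, Matrix.smul_apply, vecMulVec_apply, smul_eq_mul]
    exact (integrable_const _).sub ((hXXi i j).const_mul _)
  · fun_prop
  · intro i
    simp only [Pi.add_apply, Pi.smul_apply, smul_eq_mul]
    exact (((hξ i).integrable one_le_two).const_mul _).add
      (((hXξ i).integrable one_le_two).const_mul _)
  · fun_prop
  · exact (memLp_one_iff_integrable.1 (memLp_dotProduct hξ hξ)).const_mul _
  · refine Filter.Eventually.of_forall fun ω => ?_
    rw [integral_one_sub_smul_vecMulVec hA hXXi, hwmean, integral_const_mul,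
      integral_dotProduct_self_eq_trace hξ hS]
    simp only [sub_mulVec, one_mulVec, smul_mulVec, dotProduct_sub, dotProduct_smul, smul_eq_mul,
      dotProduct_comm u]
    ring

section Iterates

variable {Ω ι : Type*} [Fintype ι] {x : ℕ → Ω → ι → ℝ} {y : ℕ → Ω → ℝ} {γ : ℕ → ℝ}
  {θ : ℕ → Ω → ι → ℝ} {θ0 : ι → ℝ}

lemma measurable_sgd_iterate {m : MeasurableSpace Ω} (hθ0 : ∀ ω, θ 0 ω = θ0)
    (hstep : ∀ t ω, θ (t + 1) ω = θ t ω - γ (t + 1) • lsqGrad (θ t ω) (x (t + 1) ω) (y (t + 1) ω))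
    {r : ℕ} (hW : ∀ i ∈ Finset.Icc 1 r, Measurable[m] fun ω => (x i ω, y i ω)) :
    Measurable[m] (θ r) := by
  induction r with
  | zero => simp only [funext hθ0, measurable_const]
  | succ r ih =>
    have hθr := ih fun i hi => hW i (Finset.Icc_subset_Icc_right r.le_succ hi)
    have hWr := hW (r + 1) (by simp)
    have hx : Measurable[m] (x (r + 1)) := hWr.fst
    have hy : Measurable[m] (y (r + 1)) := hWr.snd
    rw [funext (hstep r)]
    fun_prop

lemma memLp_sgd_iterate {m0 : MeasurableSpace Ω} {μ : Measure Ω} [IsFiniteMeasure μ]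
    (hθ0 : ∀ ω, θ 0 ω = θ0)
    (hstep : ∀ t ω, θ (t + 1) ω = θ t ω - γ (t + 1) • lsqGrad (θ t ω) (x (t + 1) ω) (y (t + 1) ω))
    (hx : ∀ t, 1 ≤ t → ∀ i, MemLp (fun ω => x t ω i) ⊤ μ) (hy : ∀ t, MemLp (y t) 2 μ) (r : ℕ) :
    ∀ i, MemLp (fun ω => θ r ω i) 2 μ := by
  induction r with
  | zero => simp only [hθ0, memLp_const, implies_true]
  | succ r ih =>
    intro i
    simp only [hstep, Pi.sub_apply, Pi.smul_apply, smul_eq_mul]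
    exact (ih i).sub ((memLp_lsqGrad_apply ih (hx (r + 1) r.succ_pos) (hy (r + 1)) i).const_mul _)

end Iterates

lemma indep_comap_iSup_of_notMem {Ω ι β : Type*} {m0 : MeasurableSpace Ω} {μ : Measure Ω}
    [MeasurableSpace β] {W : ι → Ω → β} (hW : ∀ i, Measurable (W i)) (hindep : iIndepFun W μ)
    {k : ι} {T : Finset ι} (hk : k ∉ T) :
    Indep (MeasurableSpace.comap (W k) inferInstance)
      (⨆ i ∈ T, MeasurableSpace.comap (W i) inferInstance) μ := by
  simpa using indep_iSup_of_disjoint (fun i => (hW i).comap_le)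
    ((iIndepFun_iff_iIndep _ _ _).1 hindep) (S := {k}) (T := T) (by simpa using hk)

theorem sgd_one_step_second_moment_recursion_general {n : ℕ}
    {Ω : Type*} [MeasurableSpace Ω] (μ : Measure Ω) [IsProbabilityMeasure μ]
    (x : ℕ → Ω → Fin n → ℝ) (y : ℕ → Ω → ℝ)
    (hxm : ∀ t : ℕ, Measurable (x t)) (hym : ∀ t : ℕ, Measurable (y t))
    (hyL2 : ∀ t : ℕ, MemLp (y t) 2 μ)
    (hindep : iIndepFun
      (fun t ω => (x t ω, y t ω)) μ)
    (hident : ∀ t : ℕ, 1 ≤ t →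
      IdentDistrib (fun ω => (x t ω, y t ω)) (fun ω => (x 1 ω, y 1 ω)) μ μ)
    (M : ℝ)
    (hnorm : ∀ t : ℕ, 1 ≤ t → ∀ᵐ ω ∂μ, x t ω ⬝ᵥ x t ω = M)
    (A : Matrix (Fin n) (Fin n) ℝ)
    (hA : ∀ i j, A i j = ∫ ω, x 1 ω i * x 1 ω j ∂μ)
    (hApd : A.PosDef)
    (b : Fin n → ℝ) (hb : ∀ i, b i = ∫ ω, x 1 ω i * y 1 ω ∂μ)
    (θstar : Fin n → ℝ) (hθstar : θstar = A⁻¹ *ᵥ b)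
    (S : Matrix (Fin n) (Fin n) ℝ)
    (hSdef : ∀ i j, S i j = ∫ ω,
      ((x 1 ω ⬝ᵥ θstar) * x 1 ω i - y 1 ω * x 1 ω i) *
        ((x 1 ω ⬝ᵥ θstar) * x 1 ω j - y 1 ω * x 1 ω j) ∂μ)
    (u : Fin n → ℝ)
    (hu : ∀ i, u i = ∫ ω,
      (x 1 ω ⬝ᵥ ((x 1 ω ⬝ᵥ θstar) • x 1 ω - y 1 ω • x 1 ω)) * x 1 ω i ∂μ)
    (γ : ℕ → ℝ) (θ0 : Fin n → ℝ)
    (θ : ℕ → Ω → Fin n → ℝ)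
    (hθ0 : ∀ ω, θ 0 ω = θ0)
    (hθrec : ∀ t : ℕ, 1 ≤ t → ∀ ω,
      θ t ω = θ (t - 1) ω - γ t • ((x t ω ⬝ᵥ θ (t - 1) ω) • x t ω - y t ω • x t ω)) :
    ∀ t : ℕ, 1 ≤ t →
      μ[fun ω => (θ t ω - θstar) ⬝ᵥ (θ t ω - θstar) |
          ⨆ i ∈ Finset.Icc 1 (t - 1),
            MeasurableSpace.comap (fun ω => (x i ω, y i ω)) inferInstance] =ᵐ[μ]
        fun ω =>
          (θ (t - 1) ω - θstar) ⬝ᵥ (θ (t - 1) ω - θstar)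
            - (2 * γ t - M * γ t ^ 2) *
                ((θ (t - 1) ω - θstar) ⬝ᵥ A *ᵥ (θ (t - 1) ω - θstar))
            + γ t ^ 2 * S.trace
            + 2 * γ t ^ 2 * (u ⬝ᵥ (θ (t - 1) ω - θstar)) := by
  intro t ht
  obtain ⟨s, rfl⟩ : ∃ s, t = s + 1 := ⟨t - 1, by omega⟩
  have hstep (r : ℕ) (ω : Ω) : θ (r + 1) ω
      = θ r ω - γ (r + 1) • lsqGrad (θ r ω) (x (r + 1) ω) (y (r + 1) ω) :=
    hθrec (r + 1) r.succ_pos ω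
  have hW (i : ℕ) : Measurable fun ω => (x i ω, y i ω) := (hxm i).prodMk (hym i)
  have hxbdd (r : ℕ) (hr : 1 ≤ r) := memLp_top_apply_of_dotProduct_self_eq (hxm r) (hnorm r hr)
  have hlaw (φ : (Fin n → ℝ) × ℝ → ℝ) (hφ : Measurable φ) :
      ∫ ω, φ (x 1 ω, y 1 ω) ∂μ = ∫ ω, φ (x (s + 1) ω, y (s + 1) ω) ∂μ :=
    ((hident (s + 1) s.succ_pos).comp hφ).integral_eq.symm
  have hAθ : A *ᵥ θstar = b := by
    rw [hθstar, mulVec_mulVec, mul_nonsing_inv _ ((isUnit_iff_isUnit_det A).1 hApd.isUnit),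
      one_mulVec]
  have hmean (i : Fin n) : ∫ ω, lsqGrad θstar (x 1 ω) (y 1 ω) i ∂μ = 0 := by
    rw [integral_lsqGrad_apply hA hb
      (fun i j => ((hxbdd 1 le_rfl j).mul (hxbdd 1 le_rfl i)).integrable le_top)
      (fun i => ((hyL2 1).mul (hxbdd 1 le_rfl i)).integrable one_le_two), hAθ, sub_self]
    rfl
  simp only [Nat.add_sub_cancel, funext (hstep s)]
  exact condExp_sgd_step_sq_dist (iSup₂_le fun i _ => (hW i).comap_le) (hW (s + 1)).comap_le
    (indep_comap_iSup_of_notMem hW hindep (by simp)) (comap_measurable _).fst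
    (comap_measurable _).snd (hnorm (s + 1) s.succ_pos) (hyL2 (s + 1))
    (measurable_sgd_iterate hθ0 hstep fun i hi => measurable_iff_comap_le.2 <|
      le_biSup (fun i => MeasurableSpace.comap (fun ω => (x i ω, y i ω)) inferInstance) hi)
    (memLp_sgd_iterate hθ0 hstep hxbdd hyL2 s) θstar (γ (s + 1))
    (fun i j => (hA i j).trans (hlaw (fun z => z.1 i * z.1 j) (by fun_prop)))
    (fun i => (hlaw (fun z => lsqGrad θstar z.1 z.2 i) (by fun_prop)).symm.trans (hmean i))
    (fun i => (hSdef i i).trans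
      (hlaw (fun z => lsqGrad θstar z.1 z.2 i * lsqGrad θstar z.1 z.2 i) (by fun_prop)))
    (fun i => (hu i).trans
      (hlaw (fun z => (z.1 ⬝ᵥ lsqGrad θstar z.1 z.2) * z.1 i) (by fun_prop)))

/-- Exact one-step conditional second-moment recursion for SGD on linear regression
when all examples have squared norm exactly `M`. -/
theorem sgd_one_step_second_moment_recursion {n : ℕ}
    {Ω : Type*} [MeasurableSpace Ω] (μ : Measure Ω) [IsProbabilityMeasure μ]
    (x : ℕ → Ω → Fin n → ℝ) (y : ℕ → Ω → ℝ)
    (hxm : ∀ t : ℕ, Measurable (x t)) (hym : ∀ t : ℕ, Measurable (y t))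
    (hyL2 : ∀ t : ℕ, MemLp (y t) 2 μ)
    (hindep : iIndepFun
      (fun t ω => (x t ω, y t ω)) μ)
    (hident : ∀ t : ℕ, 1 ≤ t →
      IdentDistrib (fun ω => (x t ω, y t ω)) (fun ω => (x 1 ω, y 1 ω)) μ μ)
    (M : ℝ) (hM : 0 < M)
    (hnorm : ∀ t : ℕ, 1 ≤ t → ∀ᵐ ω ∂μ, x t ω ⬝ᵥ x t ω = M)
    (A : Matrix (Fin n) (Fin n) ℝ)
    (hA : ∀ i j, A i j = ∫ ω, x 1 ω i * x 1 ω j ∂μ)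
    (hApd : A.PosDef)
    (b : Fin n → ℝ) (hb : ∀ i, b i = ∫ ω, x 1 ω i * y 1 ω ∂μ)
    (θstar : Fin n → ℝ) (hθstar : θstar = A⁻¹ *ᵥ b)
    (S : Matrix (Fin n) (Fin n) ℝ)
    (hSdef : ∀ i j, S i j = ∫ ω,
      ((x 1 ω ⬝ᵥ θstar) * x 1 ω i - y 1 ω * x 1 ω i) *
        ((x 1 ω ⬝ᵥ θstar) * x 1 ω j - y 1 ω * x 1 ω j) ∂μ)
    (u : Fin n → ℝ)
    (hu : ∀ i, u i = ∫ ω,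
      (x 1 ω ⬝ᵥ ((x 1 ω ⬝ᵥ θstar) • x 1 ω - y 1 ω • x 1 ω)) * x 1 ω i ∂μ)
    (γ : ℕ → ℝ) (θ0 : Fin n → ℝ)
    (θ : ℕ → Ω → Fin n → ℝ)
    (hθ0 : ∀ ω, θ 0 ω = θ0)
    (hθrec : ∀ t : ℕ, 1 ≤ t → ∀ ω,
      θ t ω = θ (t - 1) ω - γ t • ((x t ω ⬝ᵥ θ (t - 1) ω) • x t ω - y t ω • x t ω)) :
    ∀ t : ℕ, 1 ≤ t →
      μ[fun ω => (θ t ω - θstar) ⬝ᵥ (θ t ω - θstar) |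
          ⨆ i ∈ Finset.Icc 1 (t - 1),
            MeasurableSpace.comap (fun ω => (x i ω, y i ω)) inferInstance] =ᵐ[μ]
        fun ω =>
          (θ (t - 1) ω - θstar) ⬝ᵥ (θ (t - 1) ω - θstar)
            - (2 * γ t - M * γ t ^ 2) *
                ((θ (t - 1) ω - θstar) ⬝ᵥ A *ᵥ (θ (t - 1) ω - θstar))
            + γ t ^ 2 * S.trace
            + 2 * γ t ^ 2 * (u ⬝ᵥ (θ (t - 1) ω - θstar)) :=
  sgd_one_step_second_moment_recursion_general μ x y hxm hym hyL2 hindep hident M hnorm A hA hApd b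
    hb θstar hθstar S hSdef u hu γ θ0 θ hθ0 hθrec
end
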